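/- arXiv:2003.06138 — 14 statements merged into one kernel-verified Lean document; each statement's English description precedes it below -/
import Mathlib

section
/- Let (x̄,ȳ) ∈ ℝⁿ×ℝᵐ be a local minimizer of (BPP). Then (BPP) is partially calm at (x̄,ȳ) if and only if there exists κ̄ > 0 such that for every κ ≥ κ̄ the point (x̄,ȳ) is a local minimizer of the partially penalized problem OVR(κ): minimize F(x,y) + κ·(f(x,y) − φ(x)) subject to x ∈ X and g(x,y) ≤ 0. -/
open Filter Topology
open scoped ENNReal NNReal

/-- Optimal value function `φ(x) = inf { f(x,y) | g(x,y) ≤ 0 }`, an extended real. -/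
noncomputable def phi {n m q : ℕ} (f : (Fin n → ℝ) → (Fin m → ℝ) → ℝ)
    (g : (Fin n → ℝ) → (Fin m → ℝ) → Fin q → ℝ) (x : Fin n → ℝ) : EReal :=
  sInf {v : EReal | ∃ y : Fin m → ℝ, (∀ i, g x y i ≤ 0) ∧ v = ((f x y : ℝ) : EReal)}

/-- Lower level solution set `S(x) = argmin_y { f(x,y) | g(x,y) ≤ 0 }`. -/
def Sol {n m q : ℕ} (f : (Fin n → ℝ) → (Fin m → ℝ) → ℝ)
    (g : (Fin n → ℝ) → (Fin m → ℝ) → Fin q → ℝ) (x : Fin n → ℝ) : Set (Fin m → ℝ) :=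
  {y | (∀ i, g x y i ≤ 0) ∧ ∀ z, (∀ i, g x z i ≤ 0) → f x y ≤ f x z}

/-- `(x̄,ȳ)` is a local minimizer of (BPP). -/
def IsLocalMinBPP {n m q : ℕ} (F : (Fin n → ℝ) → (Fin m → ℝ) → ℝ)
    (X : Set (Fin n → ℝ)) (f : (Fin n → ℝ) → (Fin m → ℝ) → ℝ)
    (g : (Fin n → ℝ) → (Fin m → ℝ) → Fin q → ℝ)
    (xb : Fin n → ℝ) (yb : Fin m → ℝ) : Prop :=
  xb ∈ X ∧ yb ∈ Sol f g xb ∧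
    ∃ ε : ℝ, 0 < ε ∧ ∀ x y, dist x xb < ε → dist y yb < ε → x ∈ X → y ∈ Sol f g x →
      F xb yb ≤ F x y

/-- (BPP) is partially calm at `(x̄,ȳ)`. -/
def PartiallyCalm {n m q : ℕ} (F : (Fin n → ℝ) → (Fin m → ℝ) → ℝ)
    (X : Set (Fin n → ℝ)) (f : (Fin n → ℝ) → (Fin m → ℝ) → ℝ)
    (g : (Fin n → ℝ) → (Fin m → ℝ) → Fin q → ℝ)
    (xb : Fin n → ℝ) (yb : Fin m → ℝ) : Prop :=
  ∃ δ : ℝ, 0 < δ ∧ ∃ κ : ℝ, 0 < κ ∧ ∀ (x : Fin n → ℝ) (y : Fin m → ℝ) (u : ℝ),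
    dist x xb ≤ δ → dist y yb ≤ δ → |u| ≤ δ → x ∈ X →
    ((f x y : ℝ) : EReal) - phi f g x ≤ ((u : ℝ) : EReal) → (∀ i, g x y i ≤ 0) →
    F xb yb ≤ F x y + κ * |u|

/-- `(x̄,ȳ)` is a local minimizer of the partially penalized problem OVR(κ):
minimize `F(x,y) + κ·(f(x,y) − φ(x))` subject to `x ∈ X`, `g(x,y) ≤ 0`. -/
noncomputable def IsLocalMinPenalized {n m q : ℕ} (F : (Fin n → ℝ) → (Fin m → ℝ) → ℝ)
    (X : Set (Fin n → ℝ)) (f : (Fin n → ℝ) → (Fin m → ℝ) → ℝ)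
    (g : (Fin n → ℝ) → (Fin m → ℝ) → Fin q → ℝ) (κ : ℝ)
    (xb : Fin n → ℝ) (yb : Fin m → ℝ) : Prop :=
  xb ∈ X ∧ (∀ i, g xb yb i ≤ 0) ∧
    ∃ ε : ℝ, 0 < ε ∧ ∀ x y, dist x xb < ε → dist y yb < ε → x ∈ X → (∀ i, g x y i ≤ 0) →
      ((F xb yb : ℝ) : EReal) + ((κ : ℝ) : EReal) * (((f xb yb : ℝ) : EReal) - phi f g xb) ≤
        ((F x y : ℝ) : EReal) + ((κ : ℝ) : EReal) * (((f x y : ℝ) : EReal) - phi f g x)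

lemma phi_le_of_feasible {n m q : ℕ} (f : (Fin n → ℝ) → (Fin m → ℝ) → ℝ)
    (g : (Fin n → ℝ) → (Fin m → ℝ) → Fin q → ℝ) (x : Fin n → ℝ) (y : Fin m → ℝ)
    (hy : ∀ i, g x y i ≤ 0) : phi f g x ≤ ((f x y : ℝ) : EReal) :=
  sInf_le ⟨y, hy, rfl⟩

lemma phi_eq_sol {n m q : ℕ} (f : (Fin n → ℝ) → (Fin m → ℝ) → ℝ)
    (g : (Fin n → ℝ) → (Fin m → ℝ) → Fin q → ℝ) (xb : Fin n → ℝ) (yb : Fin m → ℝ)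
    (hyb : yb ∈ Sol f g xb) : phi f g xb = ((f xb yb : ℝ) : EReal) := by
  refine le_antisymm (phi_le_of_feasible f g xb yb hyb.1) (le_sInf ?_)
  rintro v ⟨z, hz, rfl⟩
  exact EReal.coe_le_coe_iff.2 (hyb.2 z hz)

/-- Lemma 3.2: partial calmness is equivalent to exact penalization. -/
theorem partial_calmness_iff_exact_penalization {n m q : ℕ}
    (F : (Fin n → ℝ) → (Fin m → ℝ) → ℝ) (X : Set (Fin n → ℝ))
    (f : (Fin n → ℝ) → (Fin m → ℝ) → ℝ) (g : (Fin n → ℝ) → (Fin m → ℝ) → Fin q → ℝ)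
    (hF : LocallyLipschitz fun p : (Fin n → ℝ) × (Fin m → ℝ) => F p.1 p.2)
    (hXne : X.Nonempty) (hXcl : IsClosed X)
    (hf : Continuous fun p : (Fin n → ℝ) × (Fin m → ℝ) => f p.1 p.2)
    (hg : Continuous fun p : (Fin n → ℝ) × (Fin m → ℝ) => fun i => g p.1 p.2 i)
    (xb : Fin n → ℝ) (yb : Fin m → ℝ)
    (hmin : IsLocalMinBPP F X f g xb yb) :
    PartiallyCalm F X f g xb yb ↔
      ∃ κb : ℝ, 0 < κb ∧ ∀ κ : ℝ, κb ≤ κ → IsLocalMinPenalized F X f g κ xb yb := by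
  obtain ⟨hxX, hyS, -⟩ := hmin
  have hphixb : phi f g xb = ((f xb yb : ℝ) : EReal) := phi_eq_sol f g xb yb hyS
  have hzero : ((f xb yb : ℝ) : EReal) - phi f g xb = 0 := by
    rw [hphixb, ← EReal.coe_sub, sub_self, EReal.coe_zero]
  constructor
  · rintro ⟨δ, hδ, kbar, hkbar, hcalm⟩
    have hc : ContinuousAt (fun p : (Fin n → ℝ) × (Fin m → ℝ) => F p.1 p.2) (xb, yb) :=
      hF.continuous.continuousAt
    rw [Metric.continuousAt_iff] at hc
    obtain ⟨ε1, hε1, hball⟩ := hc 1 one_pos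
    refine ⟨kbar + 1 / δ, by positivity, fun κ hκ => ?_⟩
    have hκpos : (0 : ℝ) < κ := lt_of_lt_of_le (by positivity) hκ
    refine ⟨hxX, hyS.1, min δ ε1, lt_min hδ hε1, fun x y hx hy hxX' hfeas => ?_⟩
    rw [hzero, mul_zero, add_zero]
    have hphix_le : phi f g x ≤ ((f x y : ℝ) : EReal) := phi_le_of_feasible f g x y hfeas
    by_cases hbot : phi f g x = ⊥
    · rw [hbot, EReal.sub_bot (EReal.coe_ne_bot _),
        EReal.mul_top_of_pos (by exact_mod_cast hκpos),
        EReal.add_top_of_ne_bot (EReal.coe_ne_bot _)]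
      exact le_top
    · have htop : phi f g x ≠ ⊤ := ne_top_of_le_ne_top (EReal.coe_ne_top _) hphix_le
      set r := (phi f g x).toReal with hrdef
      have hr : phi f g x = (r : EReal) := (EReal.coe_toReal htop hbot).symm
      set u := f x y - r with hudef
      have hu0 : 0 ≤ u := by
        rw [hr, EReal.coe_le_coe_iff] at hphix_le
        simp [hudef]; linarith
      rw [hr, ← EReal.coe_sub, ← EReal.coe_mul, ← EReal.coe_add, EReal.coe_le_coe_iff]
      have hFnear : dist (F x y) (F xb yb) < 1 := by
        have := @hball (x, y) (by
          rw [Prod.dist_eq]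
          exact max_lt (lt_of_lt_of_le hx (min_le_right _ _))
            (lt_of_lt_of_le hy (min_le_right _ _)))
        exact this
      rw [Real.dist_eq] at hFnear
      by_cases hcase : u ≤ δ
      · have hcal := hcalm x y u (le_of_lt (lt_of_lt_of_le hx (min_le_left _ _)))
          (le_of_lt (lt_of_lt_of_le hy (min_le_left _ _)))
          (by rw [abs_of_nonneg hu0]; exact hcase) hxX'
          (by rw [hr, ← EReal.coe_sub]) hfeas
        rw [abs_of_nonneg hu0] at hcal
        have hkk : kbar ≤ κ := le_trans (le_add_of_nonneg_right (by positivity)) hκ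
        nlinarith [mul_le_mul_of_nonneg_right hkk hu0, hudef]
      · push_neg at hcase
        have habs : |F x y - F xb yb| < 1 := hFnear
        have h1 : F xb yb - 1 < F x y := by
          have := abs_lt.1 habs
          linarith [this.1]
        have hκ' : 1 / δ ≤ κ := le_trans (le_add_of_nonneg_left hkbar.le) hκ
        have h2 : (1 / δ) * δ ≤ κ * u :=
          mul_le_mul hκ' hcase.le hδ.le hκpos.le
        rw [one_div_mul_cancel hδ.ne', hudef] at h2
        linarith
  · rintro ⟨κb, hκb, hpen⟩
    obtain ⟨-, -, ε, hε, hloc⟩ := hpen κb le_rfl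
    refine ⟨ε / 2, by positivity, κb, hκb, fun x y u hx hy hu hxX' hfp hfeas => ?_⟩
    have hlocxy := hloc x y (lt_of_le_of_lt hx (by linarith)) (lt_of_le_of_lt hy (by linarith))
      hxX' hfeas
    have hphix_le : phi f g x ≤ ((f x y : ℝ) : EReal) := phi_le_of_feasible f g x y hfeas
    have hbot : phi f g x ≠ ⊥ := by
      intro h
      rw [h, EReal.sub_bot (EReal.coe_ne_bot _)] at hfp
      exact EReal.coe_ne_top u (top_le_iff.1 hfp)
    have htop : phi f g x ≠ ⊤ := ne_top_of_le_ne_top (EReal.coe_ne_top _) hphix_le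
    have hr : phi f g x = (((phi f g x).toReal : ℝ) : EReal) := (EReal.coe_toReal htop hbot).symm
    set r := (phi f g x).toReal
    have hv_le : f x y - r ≤ u := by
      rw [hr, ← EReal.coe_sub, EReal.coe_le_coe_iff] at hfp
      exact hfp
    have hv0 : 0 ≤ f x y - r := by
      rw [hr, EReal.coe_le_coe_iff] at hphix_le
      linarith
    rw [hzero, mul_zero, add_zero, hr, ← EReal.coe_sub, ← EReal.coe_mul, ← EReal.coe_add,
      EReal.coe_le_coe_iff] at hlocxy
    have hmono : κb * (f x y - r) ≤ κb * |u| :=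
      mul_le_mul_of_nonneg_left (hv_le.trans (le_abs_self u)) hκb.le
    linarith
end

section
/- Let (x̄,ȳ) ∈ ℝⁿ×ℝᵐ be a local minimizer of (BPP) at which the lower level problem satisfies the local uniformly weak sharp minimum condition (LUWSMC). Then (BPP) is partially calm at (x̄,ȳ). -/
open Filter Topology
open scoped ENNReal NNReal

/-- The lower level problem satisfies the local uniformly weak sharp minimum condition
(LUWSMC) at `(x̄,ȳ)`: `α·dist(y,S(x)) ≤ f(x,y) − φ(x)` for all feasible `(x,y)` near `(x̄,ȳ)`
(the distance to the empty set being `+∞`). -/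
def LUWSMC {n m q : ℕ} (f : (Fin n → ℝ) → (Fin m → ℝ) → ℝ)
    (g : (Fin n → ℝ) → (Fin m → ℝ) → Fin q → ℝ)
    (xb : Fin n → ℝ) (yb : Fin m → ℝ) : Prop :=
  ∃ α : ℝ, 0 < α ∧ ∃ ε : ℝ, 0 < ε ∧ ∀ (x : Fin n → ℝ) (y : Fin m → ℝ),
    (∀ i, g x y i ≤ 0) → dist x xb < ε → dist y yb < ε →
    ((α : ℝ) : EReal) * ((EMetric.infEdist y (Sol f g x) : ℝ≥0∞) : EReal) ≤
      ((f x y : ℝ) : EReal) - phi f g x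

/-!
If `f(x,y) - φ(x) ≤ u`, weak sharpness gives `α · dist(y, S(x)) ≤ u`. Since `S(x)` need not be
closed, we only pick a solution `z ∈ S(x)` with `α · ‖y - z‖ ≤ 2u` (for `u = 0`, `y` itself solves
the lower level problem). Then `(x,z)` is feasible for (BPP) and close to `(x̄,ȳ)`, so local
optimality and the Lipschitz constant `L` of `F` near `(x̄,ȳ)` give
`F(x̄,ȳ) ≤ F(x,z) ≤ F(x,y) + L‖y - z‖ ≤ F(x,y) + (2L/α)u`.
-/
lemma ENNReal.le_ofReal_div_of_coe_mul_le {α u : ℝ} (hα : 0 < α) {d : ℝ≥0∞}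
    (h : (α : EReal) * d ≤ u) : d ≤ ENNReal.ofReal (u / α) := by
  have hd : d ≠ ⊤ := by
    rintro rfl
    rw [EReal.coe_ennreal_top, EReal.mul_top_of_pos (EReal.coe_pos.2 hα), top_le_iff] at h
    exact EReal.coe_ne_top u h
  rw [← EReal.coe_ennreal_toReal hd, ← EReal.coe_mul, EReal.coe_le_coe_iff] at h
  rw [← ENNReal.ofReal_toReal hd]
  exact ENNReal.ofReal_le_ofReal ((le_div_iff₀' hα).2 h)

section LowerLevel

variable {n m q : ℕ} {f : (Fin n → ℝ) → (Fin m → ℝ) → ℝ}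
  {g : (Fin n → ℝ) → (Fin m → ℝ) → Fin q → ℝ} {x : Fin n → ℝ} {y : Fin m → ℝ}

lemma phi_le (hy : ∀ i, g x y i ≤ 0) : phi f g x ≤ f x y :=
  sInf_le ⟨y, hy, rfl⟩

lemma mem_Sol_of_le_phi (hy : ∀ i, g x y i ≤ 0) (h : (f x y : EReal) ≤ phi f g x) :
    y ∈ Sol f g x :=
  ⟨hy, fun _ hz => EReal.coe_le_coe_iff.1 (h.trans (phi_le hz))⟩

lemma exists_mem_Sol_mul_dist_le {α u : ℝ} (hα : 0 < α) (hy : ∀ i, g x y i ≤ 0)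
    (hsharp : (α : EReal) * (Metric.infEDist y (Sol f g x) : EReal) ≤ (f x y : EReal) - phi f g x)
    (hu : (f x y : EReal) - phi f g x ≤ u) :
    ∃ z ∈ Sol f g x, α * dist y z ≤ 2 * u := by
  rcases (phi_le hy).eq_or_lt with hEq | hlt
  · refine ⟨y, mem_Sol_of_le_phi hy hEq.ge, ?_⟩
    rw [hEq, ← EReal.coe_sub, sub_self, EReal.coe_le_coe_iff] at hu
    simpa using hu
  · have hupos : 0 < u := EReal.coe_pos.1 ((EReal.sub_pos.2 hlt).trans_le hu)
    have hdist : Metric.infEDist y (Sol f g x) < ENNReal.ofReal (2 * u / α) :=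
      (ENNReal.le_ofReal_div_of_coe_mul_le hα (hsharp.trans hu)).trans_lt
        ((ENNReal.ofReal_lt_ofReal_iff (by positivity)).2 (by gcongr; linarith))
    obtain ⟨z, hz, hyz⟩ := Metric.infEDist_lt_iff.1 hdist
    exact ⟨z, hz, ((lt_div_iff₀' hα).1 (edist_lt_ofReal.1 hyz)).le⟩

end LowerLevel

theorem luwsmc_implies_partial_calmness_general {n m q : ℕ}
    (F : (Fin n → ℝ) → (Fin m → ℝ) → ℝ) (X : Set (Fin n → ℝ))
    (f : (Fin n → ℝ) → (Fin m → ℝ) → ℝ) (g : (Fin n → ℝ) → (Fin m → ℝ) → Fin q → ℝ)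
    (hF : LocallyLipschitz fun p : (Fin n → ℝ) × (Fin m → ℝ) => F p.1 p.2)
    (xb : Fin n → ℝ) (yb : Fin m → ℝ)
    (hmin : IsLocalMinBPP F X f g xb yb)
    (hlu : LUWSMC f g xb yb) :
    PartiallyCalm F X f g xb yb := by
  obtain ⟨-, -, ε₀, hε₀, hloc⟩ := hmin
  obtain ⟨α, hα, ε₁, hε₁, hsharp⟩ := hlu
  obtain ⟨K, t, ht, hlip⟩ := hF (xb, yb)
  obtain ⟨ρ, hρ, hball⟩ := Metric.mem_nhds_iff.mp ht
  obtain ⟨e, he, he₀, he₁, heρ⟩ : ∃ e > 0, e ≤ ε₀ ∧ e ≤ ε₁ ∧ e ≤ ρ :=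
    ⟨min ε₀ (min ε₁ ρ), lt_min hε₀ (lt_min hε₁ hρ), min_le_left _ _,
      (min_le_right _ _).trans (min_le_left _ _), (min_le_right _ _).trans (min_le_right _ _)⟩
  -- `δ` is chosen so that the solution `z` found below satisfies `dist z yb ≤ δ + 2δ/α = e/2`.
  obtain ⟨δ, hδ, hδe⟩ : ∃ δ > 0, δ + 2 * δ / α = e / 2 :=
    ⟨α * e / (2 * (α + 2)), by positivity, by field_simp⟩
  refine ⟨δ, hδ, 2 * (K + 1) / α, by positivity, fun x y u hx hy hu hxX hfu hgy => ?_⟩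
  have hδα : 0 < 2 * δ / α := by positivity
  obtain ⟨z, hzS, hyz⟩ :=
    exists_mem_Sol_mul_dist_le hα hgy (hsharp x y hgy (by linarith) (by linarith)) hfu
  have hyz' : dist y z ≤ 2 * |u| / α := by
    rw [le_div_iff₀' hα]; linarith [le_abs_self u]
  have hze : dist z yb < e := by
    have : 2 * |u| / α ≤ 2 * δ / α := by gcongr
    linarith [dist_triangle_left z yb y]
  have hmem : ∀ w, dist w yb < e → (x, w) ∈ t := fun w hw =>
    hball <| by rw [Metric.mem_ball, Prod.dist_eq]; exact max_lt (by linarith) (by linarith)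
  calc F xb yb ≤ F x z := hloc x z (by linarith) (by linarith) hxX hzS
    _ ≤ F x y + K * dist y z := by
        simpa only [dist_prod_same_left, dist_comm z] using
          hlip.le_add_mul (hmem z hze) (hmem y (by linarith))
    _ ≤ F x y + (K + 1) * (2 * |u| / α) := by gcongr; linarith
    _ = F x y + 2 * (K + 1) / α * |u| := by ring

/-- Lemma 3.4: LUWSMC at a local minimizer of (BPP) implies partial calmness there. -/
theorem luwsmc_implies_partial_calmness {n m q : ℕ}
    (F : (Fin n → ℝ) → (Fin m → ℝ) → ℝ) (X : Set (Fin n → ℝ))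
    (f : (Fin n → ℝ) → (Fin m → ℝ) → ℝ) (g : (Fin n → ℝ) → (Fin m → ℝ) → Fin q → ℝ)
    (hF : LocallyLipschitz fun p : (Fin n → ℝ) × (Fin m → ℝ) => F p.1 p.2)
    (hXne : X.Nonempty) (hXcl : IsClosed X)
    (hf : Continuous fun p : (Fin n → ℝ) × (Fin m → ℝ) => f p.1 p.2)
    (hg : Continuous fun p : (Fin n → ℝ) × (Fin m → ℝ) => fun i => g p.1 p.2 i)
    (xb : Fin n → ℝ) (yb : Fin m → ℝ)
    (hmin : IsLocalMinBPP F X f g xb yb)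
    (hlu : LUWSMC f g xb yb) :
    PartiallyCalm F X f g xb yb :=
  luwsmc_implies_partial_calmness_general F X f g hF xb yb hmin hlu
end

section
/- Let (x̄,ȳ) ∈ gph S be a point at which the R-regularity constraint qualification (RRCQ) holds, and assume there is a neighbourhood U ⊆ ℝⁿ of x̄ such that (dom Γ) ∩ U = (dom S) ∩ U, where Γ(x) = { y ∈ ℝᵐ | g(x,y) ≤ 0 } and dom denotes the set of parameters with nonempty image. Then the lower level problem satisfies the local uniformly weak sharp minimum condition (LUWSMC) at (x̄,ȳ). -/
open Filter Topology
open scoped ENNReal NNReal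

/-- The R-regularity constraint qualification (RRCQ) at `(x̄,ȳ) ∈ gph S`:
`dist(y,Φ(x)) ≤ κ·max{0, f(x,y) − φ(x), g₁(x,y), …, g_q(x,y)}` for all `(x,y)` near
`(x̄,ȳ)` with `Φ(x) ≠ ∅` (note `Φ(x) = S(x)`, so that `φ(x)` is finite there). -/
def RRCQ {n m q : ℕ} (f : (Fin n → ℝ) → (Fin m → ℝ) → ℝ)
    (g : (Fin n → ℝ) → (Fin m → ℝ) → Fin q → ℝ)
    (xb : Fin n → ℝ) (yb : Fin m → ℝ) : Prop :=
  ∃ κ : ℝ, 0 < κ ∧ ∃ ε : ℝ, 0 < ε ∧ ∀ (x : Fin n → ℝ) (y : Fin m → ℝ),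
    dist x xb < ε → dist y yb < ε → (Sol f g x).Nonempty →
    Metric.infDist y (Sol f g x) ≤
      κ * max (max 0 (f x y - (phi f g x).toReal))
        (Finset.univ.fold max 0 fun i => g x y i)

/-- Lemma 3.5: RRCQ plus local coincidence of `dom Γ` and `dom S` implies LUWSMC. -/
theorem rrcq_implies_luwsmc {n m q : ℕ}
    (f : (Fin n → ℝ) → (Fin m → ℝ) → ℝ) (g : (Fin n → ℝ) → (Fin m → ℝ) → Fin q → ℝ)
    (hf : Continuous fun p : (Fin n → ℝ) × (Fin m → ℝ) => f p.1 p.2)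
    (hg : Continuous fun p : (Fin n → ℝ) × (Fin m → ℝ) => fun i => g p.1 p.2 i)
    (xb : Fin n → ℝ) (yb : Fin m → ℝ)
    (hgph : yb ∈ Sol f g xb)
    (hrrcq : RRCQ f g xb yb)
    (hdom : ∃ U ∈ 𝓝 xb, ∀ x ∈ U,
      ((∃ y : Fin m → ℝ, ∀ i, g x y i ≤ 0) ↔ (Sol f g x).Nonempty)) :
    ∃ α : ℝ, 0 < α ∧ ∃ ε : ℝ, 0 < ε ∧ ∀ (x : Fin n → ℝ) (y : Fin m → ℝ),
      (∀ i, g x y i ≤ 0) → dist x xb < ε → dist y yb < ε →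
      ((α : ℝ) : EReal) * ((EMetric.infEdist y (Sol f g x) : ℝ≥0∞) : EReal) ≤
        ((f x y : ℝ) : EReal) - phi f g x := by
  obtain ⟨κ, hκ, ε₀, hε₀, hR⟩ := hrrcq
  obtain ⟨U, hU, hUiff⟩ := hdom
  obtain ⟨δ, hδ, hball⟩ := Metric.mem_nhds_iff.mp hU
  refine ⟨κ⁻¹, inv_pos.mpr hκ, min ε₀ δ, lt_min hε₀ hδ, fun x y hgxy hx hy => ?_⟩
  have hxU : x ∈ U := hball (by simpa [Metric.mem_ball] using lt_of_lt_of_le hx (min_le_right _ _))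
  have hSne : (Sol f g x).Nonempty := (hUiff x hxU).mp ⟨y, hgxy⟩
  obtain ⟨ys, hys⟩ := hSne
  -- phi equals f x ys
  have hphi : phi f g x = ((f x ys : ℝ) : EReal) := by
    apply le_antisymm
    · exact sInf_le ⟨ys, hys.1, rfl⟩
    · apply le_sInf
      rintro v ⟨z, hz, rfl⟩
      exact EReal.coe_le_coe_iff.mpr (hys.2 z hz)
  have htR : (phi f g x).toReal = f x ys := by rw [hphi]; exact EReal.toReal_coe _
  -- the fold term is nonpositive
  have hB : (Finset.univ.fold max 0 fun i => g x y i) ≤ 0 :=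
    (Finset.fold_max_le _).mpr ⟨le_refl 0, fun i _ => hgxy i⟩
  have hA : (0:ℝ) ≤ f x y - (phi f g x).toReal := by
    rw [htR]; linarith [hys.2 y hgxy]
  have hd : Metric.infDist y (Sol f g x) ≤ κ * (f x y - f x ys) := by
    have := hR x y (lt_of_lt_of_le hx (min_le_left _ _)) (lt_of_lt_of_le hy (min_le_left _ _))
      ⟨ys, hys⟩
    rwa [max_eq_left (le_trans hB (le_max_left _ _)), max_eq_right hA, htR] at this
  have hreal : κ⁻¹ * Metric.infDist y (Sol f g x) ≤ f x y - f x ys := by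
    have h1 : κ⁻¹ * κ = 1 := inv_mul_cancel₀ hκ.ne'
    nlinarith [Metric.infDist_nonneg (x := y) (s := Sol f g x)]
  have hne : EMetric.infEdist y (Sol f g x) ≠ ⊤ := Metric.infEdist_ne_top ⟨ys, hys⟩
  have h1 : ((EMetric.infEdist y (Sol f g x) : ℝ≥0∞) : EReal)
      = ((Metric.infDist y (Sol f g x) : ℝ) : EReal) := by
    conv_lhs => rw [← ENNReal.ofReal_toReal hne]
    rw [EReal.coe_ennreal_ofReal, max_eq_left ENNReal.toReal_nonneg]
    rfl
  rw [h1, hphi, ← EReal.coe_mul, ← EReal.coe_sub]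
  exact EReal.coe_le_coe_iff.mpr hreal
end

section
/- Let c ∈ ℝᵐ and B ∈ ℝ^{q×m} be fixed, let A : ℝⁿ → ℝ^q be continuous, and let the lower level data be f(x,y) = cᵀy and g(x,y) = A(x) + By, so that S(x) = argmin_y { cᵀy | A(x) + By ≤ 0 }. If (x̄,ȳ) ∈ ℝⁿ×ℝᵐ is a local minimizer of (BPP), then (BPP) is partially calm at (x̄,ȳ). -/
open Filter Topology
open scoped ENNReal NNReal

/-!
The proof rests on Hoffman's error bound: for a fixed matrix `M` there is a constant `K`,
independent of `b`, such that every `y` with `M y ≤ b + r` lies within `K r` of the polyhedron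
`{z | M z ≤ b}` as soon as the latter is nonempty. Applied to the system `B z ≤ -A(x)`,
`cᵀz ≤ φ(x)`, whose solution set is `S(x)`, it turns `cᵀy - φ(x) ≤ u` into a point of `S(x)` within
`K u` of `y`, uniformly in `x`. Comparing `F` at that point with `F(x̄,ȳ)` (local optimality) and
with `F(x,y)` (Lipschitz constant `L`) gives partial calmness with `κ = L K + 1`.

Hoffman's bound is proved by induction on the dimension, eliminating one variable at a time by
Fourier–Motzkin; for the eliminated variable the nearby solution is written down explicitly.
That the lower level value `φ(x)` is attained also follows from the bound, by compactness.
-/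

open Matrix

section OneDim

variable {ι : Type*} {α c : ι → ℝ}

theorem exists_forall_mul_le [Fintype ι] (h₀ : ∀ i, α i = 0 → 0 ≤ c i)
    (hpair : ∀ i j, 0 < α i → α j < 0 → (α j)⁻¹ * c j ≤ (α i)⁻¹ * c i) :
    ∃ t, ∀ i, α i * t ≤ c i := by
  -- `m` is below every upper bound `(α i)⁻¹ * c i`: a safe seed for the maximum of the lower ones
  set m := -∑ i, |(α i)⁻¹ * c i|
  have hm : ∀ i, m ≤ (α i)⁻¹ * c i := fun i =>
    neg_le.mp <| (neg_le_abs _).trans <|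
      Finset.single_le_sum (f := fun i => |(α i)⁻¹ * c i|) (fun _ _ => abs_nonneg _)
        (Finset.mem_univ i)
  set lower : ι → ℝ := fun j => if α j < 0 then (α j)⁻¹ * c j else m
  set t := Finset.univ.fold max m lower
  refine ⟨t, fun i => ?_⟩
  rcases lt_trichotomy (α i) 0 with hi | hi | hi
  · have ht : (α i)⁻¹ * c i ≤ t :=
      (Finset.le_fold_max _).2 <| .inr ⟨i, Finset.mem_univ i, by simp [lower, hi]⟩
    calc α i * t ≤ α i * ((α i)⁻¹ * c i) := mul_le_mul_of_nonpos_left ht hi.le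
      _ = c i := mul_inv_cancel_left₀ hi.ne _
  · simpa [hi] using h₀ i hi
  · have ht : t ≤ (α i)⁻¹ * c i := by
      refine (Finset.fold_max_le _).2 ⟨hm i, fun j _ => ?_⟩
      by_cases hj : α j < 0
      · simpa [lower, hj] using hpair i j hi hj
      · simpa [lower, hj] using hm i
    calc α i * t ≤ α i * ((α i)⁻¹ * c i) := mul_le_mul_of_nonneg_left ht hi.le
      _ = c i := mul_inv_cancel_left₀ hi.ne' _

theorem exists_forall_mul_le_abs_sub_le_of_le {t₀ y s : ℝ} (hs : 0 ≤ s)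
    (ht₀ : ∀ i, α i * t₀ ≤ c i) (hy : ∀ i, α i * y ≤ c i + |α i| * s) (hty : t₀ ≤ y) :
    ∃ t, (∀ i, α i * t ≤ c i) ∧ |t - y| ≤ s := by
  have hle : max t₀ (y - s) ≤ y := max_le hty (by linarith)
  have hge : y - s ≤ max t₀ (y - s) := le_max_right _ _
  refine ⟨max t₀ (y - s), fun i => ?_, abs_sub_le_iff.2 ⟨by linarith, by linarith⟩⟩
  rcases le_or_gt (α i) 0 with hi | hi
  · exact (mul_le_mul_of_nonpos_left (le_max_left _ _) hi).trans (ht₀ i)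
  · rw [mul_max_of_nonneg _ _ hi.le]
    refine max_le (ht₀ i) ?_
    have := hy i
    rw [abs_of_pos hi] at this
    linarith

theorem exists_forall_mul_le_abs_sub_le {t₀ y s : ℝ} (hs : 0 ≤ s)
    (ht₀ : ∀ i, α i * t₀ ≤ c i) (hy : ∀ i, α i * y ≤ c i + |α i| * s) :
    ∃ t, (∀ i, α i * t ≤ c i) ∧ |t - y| ≤ s := by
  rcases le_total t₀ y with hty | hyt
  · exact exists_forall_mul_le_abs_sub_le_of_le hs ht₀ hy hty
  · obtain ⟨t, ht, hts⟩ := exists_forall_mul_le_abs_sub_le_of_le (α := -α) (t₀ := -t₀)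
      (y := -y) hs (by simpa using ht₀) (by simpa using hy) (neg_le_neg hyt)
    refine ⟨-t, fun i => by simpa using ht i, ?_⟩
    rwa [show -t - y = -(t - -y) by ring, abs_neg]

end OneDim

section Elimination

variable {ι κ : Type*} [Fintype κ] (α : ι → ℝ)

/- Fourier–Motzkin elimination of `t` from the system `α i * t + (a *ᵥ x) i ≤ b i`: the rows with
`α i = 0` are kept, and every upper bound `t ≤ (α i)⁻¹ * (b i - (a *ᵥ x) i)` (`0 < α i`) is
combined with every lower bound `(α j)⁻¹ * (b j - (a *ᵥ x) j) ≤ t` (`α j < 0`). -/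
abbrev ElimIndex : Type _ := {i // α i = 0} ⊕ ({i // 0 < α i} × {j // α j < 0})

noncomputable def elimMatrix (a : Matrix ι κ ℝ) : Matrix (ElimIndex α) κ ℝ
  | .inl i => a i
  | .inr (i, j) => (α i)⁻¹ • a i - (α j)⁻¹ • a j

noncomputable def elimRhs (b : ι → ℝ) : ElimIndex α → ℝ
  | .inl i => b i
  | .inr (i, j) => (α i)⁻¹ * b i - (α j)⁻¹ * b j

variable {α} {a : Matrix ι κ ℝ} {b : ι → ℝ}

@[simp]
theorem elimMatrix_mulVec_inl (x : κ → ℝ) (i : {i // α i = 0}) :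
    (elimMatrix α a *ᵥ x) (.inl i) = (a *ᵥ x) i := rfl

@[simp]
theorem elimMatrix_mulVec_inr (x : κ → ℝ) (i : {i // 0 < α i}) (j : {j // α j < 0}) :
    (elimMatrix α a *ᵥ x) (.inr (i, j)) = (α i)⁻¹ * (a *ᵥ x) i - (α j)⁻¹ * (a *ᵥ x) j := by
  change ((α i)⁻¹ • a i - (α j)⁻¹ • a j) ⬝ᵥ x = _
  rw [sub_dotProduct, smul_dotProduct, smul_dotProduct]
  rfl

-- Since `|0|⁻¹ = 0`, only the nonzero coefficients contribute to `∑ i, |α i|⁻¹`.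
theorem elimMatrix_mulVec_le [Fintype ι] {t r : ℝ} {x : κ → ℝ} (hr : 0 ≤ r)
    (h : ∀ i, α i * t + (a *ᵥ x) i ≤ b i + r) (e : ElimIndex α) :
    (elimMatrix α a *ᵥ x) e ≤ elimRhs α b e + (1 + 2 * ∑ i, |α i|⁻¹) * r := by
  have hsum : ∀ i, |α i|⁻¹ ≤ ∑ i, |α i|⁻¹ := fun i =>
    Finset.single_le_sum (f := fun i => |α i|⁻¹) (fun _ _ => by positivity) (Finset.mem_univ i)
  rcases e with ⟨i, hi⟩ | ⟨⟨i, hi⟩, ⟨j, hj⟩⟩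
  · have := h i
    simp only [hi, zero_mul, zero_add] at this
    simp only [elimMatrix_mulVec_inl, elimRhs]
    nlinarith [mul_nonneg ((inv_nonneg.2 (abs_nonneg _)).trans (hsum i)) hr]
  · have hi' := mul_le_mul_of_nonneg_left (h i) (inv_pos.2 hi).le
    have hj' := mul_le_mul_of_nonpos_left (h j) (inv_lt_zero.2 hj).le
    rw [mul_add, inv_mul_cancel_left₀ hi.ne'] at hi'
    rw [mul_add, mul_add, inv_mul_cancel_left₀ hj.ne] at hj'
    have hC : (α i)⁻¹ - (α j)⁻¹ ≤ 2 * ∑ i, |α i|⁻¹ := by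
      rw [← abs_of_pos hi, ← neg_neg (α j), ← abs_of_neg hj, inv_neg]
      linarith [hsum i, hsum j]
    simp only [elimMatrix_mulVec_inr, elimRhs]
    nlinarith [mul_le_mul_of_nonneg_right hC hr]

theorem exists_forall_mul_add_mulVec_le [Fintype ι] {x : κ → ℝ}
    (hx : elimMatrix α a *ᵥ x ≤ elimRhs α b) : ∃ t, ∀ i, α i * t + (a *ᵥ x) i ≤ b i := by
  have h₀ : ∀ i, α i = 0 → 0 ≤ b i - (a *ᵥ x) i := fun i hi => by
    simpa [elimRhs] using hx (.inl ⟨i, hi⟩)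
  have hpair : ∀ i j, 0 < α i → α j < 0 →
      (α j)⁻¹ * (b j - (a *ᵥ x) j) ≤ (α i)⁻¹ * (b i - (a *ᵥ x) i) := fun i j hi hj => by
    have := hx (.inr (⟨i, hi⟩, ⟨j, hj⟩))
    simp only [elimMatrix_mulVec_inr, elimRhs] at this
    linarith
  obtain ⟨t, ht⟩ := exists_forall_mul_le h₀ hpair
  exact ⟨t, fun i => by linarith [ht i]⟩

open scoped Matrix.Norms.Operator in
theorem exists_forall_mul_add_mulVec_le_abs_sub_le [Fintype ι] {x x' : κ → ℝ} {t' r ρ : ℝ}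
    (hx : elimMatrix α a *ᵥ x ≤ elimRhs α b) (hr : 0 ≤ r) (hρ : 0 ≤ ρ)
    (hy : ∀ i, α i * t' + (a *ᵥ x') i ≤ b i + r) (hxx' : dist x x' ≤ ρ) :
    ∃ t, (∀ i, α i * t + (a *ᵥ x) i ≤ b i) ∧
      |t - t'| ≤ (∑ i, |α i|⁻¹) * (r + ‖a‖ * ρ) := by
  obtain ⟨t₀, ht₀⟩ := exists_forall_mul_add_mulVec_le hx
  have hshift : ∀ i, |(a *ᵥ x) i - (a *ᵥ x') i| ≤ ‖a‖ * ρ := fun i => by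
    rw [← Pi.sub_apply, ← mulVec_sub, ← Real.norm_eq_abs]
    calc ‖(a *ᵥ (x - x')) i‖ ≤ ‖a *ᵥ (x - x')‖ := norm_le_pi_norm _ i
      _ ≤ ‖a‖ * ‖x - x'‖ := linfty_opNorm_mulVec a _
      _ ≤ ‖a‖ * ρ := by rw [← dist_eq_norm]; gcongr
  have hv : 0 ≤ r + ‖a‖ * ρ := by positivity
  obtain ⟨t, ht, htt'⟩ := exists_forall_mul_le_abs_sub_le (α := α)
    (c := fun i => b i - (a *ᵥ x) i) (t₀ := t₀) (y := t') (s := (∑ i, |α i|⁻¹) * (r + ‖a‖ * ρ))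
    (by positivity) (fun i => by linarith [ht₀ i]) fun i => by
      rcases eq_or_ne (α i) 0 with hi | hi
      · simpa [hi] using ht₀ i
      · have h1 : 1 ≤ |α i| * ∑ i, |α i|⁻¹ := by
          calc 1 = |α i| * |α i|⁻¹ := (mul_inv_cancel₀ (abs_ne_zero.2 hi)).symm
            _ ≤ |α i| * ∑ i, |α i|⁻¹ := by
              gcongr
              exact Finset.single_le_sum (f := fun i => |α i|⁻¹) (fun _ _ => by positivity)
                (Finset.mem_univ i)
        nlinarith [hy i, (abs_le.1 (hshift i)).2, mul_le_mul_of_nonneg_right h1 hv]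
  exact ⟨t, fun i => by linarith [ht i], htt'⟩

end Elimination

section Hoffman

variable {ι κ : Type*} [Fintype κ]

def IsHoffmanConstant (M : Matrix ι κ ℝ) (K : ℝ) : Prop :=
  ∀ (b : ι → ℝ) (r : ℝ) (y : κ → ℝ), 0 ≤ r → (∃ z, M *ᵥ z ≤ b) →
    (∀ i, (M *ᵥ y) i ≤ b i + r) → ∃ z, M *ᵥ z ≤ b ∧ dist z y ≤ K * r

theorem mulVec_apply_eq_mul_add {k : ℕ} (M : Matrix ι (Fin (k + 1)) ℝ) (v : Fin (k + 1) → ℝ)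
    (i : ι) : (M *ᵥ v) i = M i 0 * v 0 + (M.submatrix id Fin.succ *ᵥ Fin.tail v) i := by
  simp [mulVec, dotProduct, Fin.sum_univ_succ, Fin.tail]

open scoped Matrix.Norms.Operator in
theorem exists_isHoffmanConstant_of_elimMatrix [Fintype ι] {k : ℕ}
    {M : Matrix ι (Fin (k + 1)) ℝ} {K : ℝ} (hK : 0 ≤ K)
    (h : IsHoffmanConstant (elimMatrix (fun i => M i 0) (M.submatrix id Fin.succ)) K) :
    ∃ K', 0 ≤ K' ∧ IsHoffmanConstant M K' := by
  set α : ι → ℝ := fun i => M i 0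
  set a := M.submatrix id Fin.succ
  set D := ∑ i, |α i|⁻¹
  set C := 1 + 2 * D
  have hD : 0 ≤ D := Finset.sum_nonneg fun _ _ => by positivity
  have hC : 0 ≤ C := by positivity
  have hE : 0 ≤ D * (1 + ‖a‖ * (K * C)) := by positivity
  refine ⟨K * C + D * (1 + ‖a‖ * (K * C)), by positivity, ?_⟩
  intro b r y hr ⟨z₀, hz₀⟩ hy
  simp only [mulVec_apply_eq_mul_add M] at hy
  obtain ⟨x, hx, hxy⟩ := h (elimRhs α b) (C * r) (Fin.tail y) (by positivity)
    ⟨Fin.tail z₀, fun e => by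
      simpa using elimMatrix_mulVec_le le_rfl (fun i => by
        simpa [mulVec_apply_eq_mul_add M] using hz₀ i) e⟩
    (elimMatrix_mulVec_le hr hy)
  obtain ⟨t, ht, hty⟩ :=
    exists_forall_mul_add_mulVec_le_abs_sub_le hx hr (by positivity) hy hxy
  refine ⟨Fin.cons t x, fun i => by simpa [mulVec_apply_eq_mul_add M] using ht i, ?_⟩
  rw [dist_pi_le_iff (by positivity)]
  refine Fin.cases ?_ fun j => ?_
  · rw [Fin.cons_zero, Real.dist_eq]
    refine hty.trans ?_
    nlinarith [mul_nonneg (mul_nonneg hK hC) hr]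
  · rw [Fin.cons_succ]
    calc dist (x j) (y j.succ) ≤ dist x (Fin.tail y) := dist_le_pi_dist x (Fin.tail y) j
      _ ≤ K * (C * r) := hxy
      _ ≤ (K * C + D * (1 + ‖a‖ * (K * C))) * r := by nlinarith [mul_nonneg hE hr]

theorem exists_isHoffmanConstant [Fintype ι] {k : ℕ} (M : Matrix ι (Fin k) ℝ) :
    ∃ K, 0 ≤ K ∧ IsHoffmanConstant M K := by
  induction k generalizing ι with
  | zero => exact ⟨0, le_rfl, fun b r y _ ⟨z, hz⟩ _ => ⟨z, hz, by simp [Subsingleton.elim z y]⟩⟩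
  | succ k ih =>
    obtain ⟨K, hK, h⟩ := ih (elimMatrix (fun i => M i 0) (M.submatrix id Fin.succ))
    exact exists_isHoffmanConstant_of_elimMatrix hK h

end Hoffman

section LinearProgram

variable {ι : Type*} [Fintype ι] {k : ℕ}

theorem exists_sublevel_dist_le (M : Matrix ι (Fin k) ℝ) (c : Fin k → ℝ) :
    ∃ K, 0 ≤ K ∧ ∀ (b : ι → ℝ) (v r : ℝ) (y : Fin k → ℝ), 0 ≤ r →
      (∃ z, M *ᵥ z ≤ b ∧ c ⬝ᵥ z ≤ v) → M *ᵥ y ≤ b → c ⬝ᵥ y ≤ v + r →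
      ∃ z, (M *ᵥ z ≤ b ∧ c ⬝ᵥ z ≤ v) ∧ dist z y ≤ K * r := by
  obtain ⟨K, hK, h⟩ := exists_isHoffmanConstant (fromRows M (replicateRow Unit c))
  have hle (b : ι → ℝ) (v : ℝ) (z : Fin k → ℝ) :
      fromRows M (replicateRow Unit c) *ᵥ z ≤ (Sum.elim b fun _ => v) ↔
        M *ᵥ z ≤ b ∧ c ⬝ᵥ z ≤ v := by
    simp [fromRows_mulVec, replicateRow_mulVec_eq_const, Pi.le_def]
  refine ⟨K, hK, fun b v r y hr ⟨z₀, hz₀⟩ hyM hyc => ?_⟩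
  obtain ⟨z, hz, hzy⟩ := h (Sum.elim b fun _ => v) r y hr ⟨z₀, (hle b v z₀).2 hz₀⟩ <| by
    rintro (i | -)
    · simpa [fromRows_mulVec] using (hyM i).trans (le_add_of_nonneg_right hr)
    · simpa [fromRows_mulVec, replicateRow_mulVec_eq_const] using hyc
  exact ⟨z, (hle b v z).1 hz, hzy⟩

theorem exists_forall_dotProduct_le (M : Matrix ι (Fin k) ℝ) (b : ι → ℝ) (c : Fin k → ℝ)
    (hfeas : ∃ y, M *ᵥ y ≤ b) (hbdd : ∃ β, ∀ y, M *ᵥ y ≤ b → β ≤ c ⬝ᵥ y) :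
    ∃ z, M *ᵥ z ≤ b ∧ ∀ w, M *ᵥ w ≤ b → c ⬝ᵥ z ≤ c ⬝ᵥ w := by
  obtain ⟨K, hK, hsub⟩ := exists_sublevel_dist_le M c
  obtain ⟨y, hy⟩ := hfeas
  obtain ⟨β, hβ⟩ := hbdd
  -- by Hoffman's bound, every nonempty `{w | M *ᵥ w ≤ b ∧ c ⬝ᵥ w ≤ v}` with `v ≤ c ⬝ᵥ y` meets `S`
  set S := {z | M *ᵥ z ≤ b} ∩ Metric.closedBall y (K * (c ⬝ᵥ y - β))
  have hS : IsCompact S := (isCompact_closedBall _ _).inter_left <|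
    isClosed_le (continuous_const.matrix_mulVec continuous_id) continuous_const
  have hyS : y ∈ S := ⟨hy, Metric.mem_closedBall_self (mul_nonneg hK (by linarith [hβ y hy]))⟩
  obtain ⟨z, ⟨hz, -⟩, hmin⟩ :=
    hS.exists_isMinOn ⟨y, hyS⟩ (continuous_const.dotProduct continuous_id).continuousOn
  refine ⟨z, hz, fun w hw => ?_⟩
  rcases le_total (c ⬝ᵥ y) (c ⬝ᵥ w) with hyw | hwy
  · exact (hmin hyS).trans hyw
  · obtain ⟨z', ⟨hz'M, hz'c⟩, hz'y⟩ :=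
      hsub b (c ⬝ᵥ w) (c ⬝ᵥ y - c ⬝ᵥ w) y (by linarith) ⟨w, hw, le_rfl⟩ hy (by linarith)
    have hz'S : z' ∈ S := ⟨hz'M, hz'y.trans (by gcongr; linarith [hβ w hw])⟩
    exact (hmin hz'S).trans hz'c

end LinearProgram

section Bilevel

variable {n m q : ℕ}

/-- The lower level problem has a uniform weak sharp minimum with constant `K`, in the form
`dist(y, S(x)) ≤ K (f(x,y) - φ(x))` with the distance attained. -/
def UniformWeakSharpMin (f : (Fin n → ℝ) → (Fin m → ℝ) → ℝ)
    (g : (Fin n → ℝ) → (Fin m → ℝ) → Fin q → ℝ) (K : ℝ) : Prop :=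
  ∀ x y (u : ℝ), (∀ i, g x y i ≤ 0) → ((f x y : ℝ) : EReal) - phi f g x ≤ u →
    ∃ z ∈ Sol f g x, dist z y ≤ K * u

theorem le_add_of_coe_sub_phi_le {f : (Fin n → ℝ) → (Fin m → ℝ) → ℝ}
    {g : (Fin n → ℝ) → (Fin m → ℝ) → Fin q → ℝ} {x : Fin n → ℝ} {y w : Fin m → ℝ} {u : ℝ}
    (hw : ∀ i, g x w i ≤ 0) (h : ((f x y : ℝ) : EReal) - phi f g x ≤ u) :
    f x y ≤ f x w + u := by
  have hφ : phi f g x ≤ f x w := sInf_le ⟨w, hw, rfl⟩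
  have : ((f x y - f x w : ℝ) : EReal) ≤ u := (EReal.sub_le_sub le_rfl hφ).trans h
  linarith [EReal.coe_le_coe_iff.1 this]

theorem exists_uniformWeakSharpMin_linear (A : (Fin n → ℝ) → Fin q → ℝ)
    (B : Fin q → Fin m → ℝ) (c : Fin m → ℝ) :
    ∃ K, 0 ≤ K ∧ UniformWeakSharpMin (fun _ y => ∑ j, c j * y j)
      (fun x y i => A x i + ∑ j, B i j * y j) K := by
  obtain ⟨K, hK, hsub⟩ := exists_sublevel_dist_le B c
  refine ⟨K, hK, fun x y u hy hu => ?_⟩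
  have hfeas (w : Fin m → ℝ) : (∀ i, A x i + ∑ j, B i j * w j ≤ 0) ↔ B *ᵥ w ≤ -A x := by
    simp [Pi.le_def, mulVec, dotProduct, le_neg_iff_add_nonpos_left]
  have hlow (w : Fin m → ℝ) (hw : B *ᵥ w ≤ -A x) : c ⬝ᵥ y ≤ c ⬝ᵥ w + u :=
    le_add_of_coe_sub_phi_le (f := fun _ y => ∑ j, c j * y j) ((hfeas w).2 hw) hu
  have hyB := (hfeas y).1 hy
  obtain ⟨z₀, hz₀, hz₀min⟩ := exists_forall_dotProduct_le B (-A x) c ⟨y, hyB⟩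
    ⟨c ⬝ᵥ y - u, fun w hw => by linarith [hlow w hw]⟩
  obtain ⟨z, ⟨hzB, hzc⟩, hzy⟩ := hsub (-A x) (c ⬝ᵥ z₀) u y
    (by linarith [hlow z₀ hz₀, hz₀min y hyB]) ⟨z₀, hz₀, le_rfl⟩ hyB (hlow z₀ hz₀)
  exact ⟨z, ⟨(hfeas z).2 hzB, fun w hw => hzc.trans (hz₀min w ((hfeas w).1 hw))⟩, hzy⟩

theorem partiallyCalm_of_uniformWeakSharpMin {F : (Fin n → ℝ) → (Fin m → ℝ) → ℝ}
    {X : Set (Fin n → ℝ)} {f : (Fin n → ℝ) → (Fin m → ℝ) → ℝ}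
    {g : (Fin n → ℝ) → (Fin m → ℝ) → Fin q → ℝ} {xb : Fin n → ℝ} {yb : Fin m → ℝ} {K : ℝ}
    (hF : LocallyLipschitz fun p : (Fin n → ℝ) × (Fin m → ℝ) => F p.1 p.2)
    (hmin : IsLocalMinBPP F X f g xb yb) (hK : 0 ≤ K) (hfg : UniformWeakSharpMin f g K) :
    PartiallyCalm F X f g xb yb := by
  obtain ⟨-, -, ε, hε, hloc⟩ := hmin
  obtain ⟨L, U, hU, hlip⟩ := hF (xb, yb)
  obtain ⟨η, hη, hball⟩ := Metric.mem_nhds_iff.1 hU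
  set ρ := min ε η
  have hρ : 0 < ρ := lt_min hε hη
  set δ := ρ / (2 * (K + 1))
  have hδ : 0 < δ := by positivity
  have hδρ : (K + 1) * δ < ρ := by
    rw [show (K + 1) * δ = ρ / 2 by simp only [δ]; field_simp]
    linarith
  refine ⟨δ, hδ, L * K + 1, by positivity, fun x y u hx hy hu hxX hφ hfeas => ?_⟩
  obtain ⟨z, hzS, hzy⟩ := hfg x y u hfeas hφ
  have hKu : K * u ≤ K * δ := mul_le_mul_of_nonneg_left ((le_abs_self u).trans hu) hK
  have hxρ : dist x xb < ρ := by nlinarith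
  have hyρ : dist y yb < ρ := by nlinarith
  have hzρ : dist z yb < ρ :=
    calc dist z yb ≤ dist z y + dist y yb := dist_triangle _ _ _
      _ ≤ K * δ + δ := add_le_add (hzy.trans hKu) hy
      _ < ρ := by linarith
  have hmem (w : Fin m → ℝ) (hw : dist w yb < ρ) : (x, w) ∈ U := by
    refine hball ?_
    rw [Metric.mem_ball, Prod.dist_eq]
    exact max_lt (hxρ.trans_le (min_le_right _ _)) (hw.trans_le (min_le_right _ _))
  have hFz : F x z ≤ F x y + L * dist z y := by
    have := hlip.dist_le_mul (x, z) (hmem z hzρ) (x, y) (hmem y hyρ)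
    rw [Real.dist_eq, Prod.dist_eq, dist_self, max_eq_right dist_nonneg] at this
    linarith [le_abs_self (F x z - F x y)]
  calc F xb yb ≤ F x z :=
        hloc x z (hxρ.trans_le (min_le_left _ _)) (hzρ.trans_le (min_le_left _ _)) hxX hzS
    _ ≤ F x y + L * (K * u) := hFz.trans (by gcongr)
    _ ≤ F x y + (L * K + 1) * |u| := by
      nlinarith [mul_le_mul_of_nonneg_left (le_abs_self u) (mul_nonneg L.coe_nonneg hK),
        abs_nonneg u]

end Bilevel

theorem partial_calmness_fully_linear_lower_level_general {n m q : ℕ}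
    (F : (Fin n → ℝ) → (Fin m → ℝ) → ℝ) (X : Set (Fin n → ℝ))
    (c : Fin m → ℝ) (B : Fin q → Fin m → ℝ) (A : (Fin n → ℝ) → Fin q → ℝ)
    (hF : LocallyLipschitz fun p : (Fin n → ℝ) × (Fin m → ℝ) => F p.1 p.2)
    (xb : Fin n → ℝ) (yb : Fin m → ℝ)
    (hmin : IsLocalMinBPP F X (fun _ y => ∑ j, c j * y j)
      (fun x y i => A x i + ∑ j, B i j * y j) xb yb) :
    PartiallyCalm F X (fun _ y => ∑ j, c j * y j)
      (fun x y i => A x i + ∑ j, B i j * y j) xb yb := by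
  obtain ⟨K, hK, hweak⟩ := exists_uniformWeakSharpMin_linear A B c
  exact partiallyCalm_of_uniformWeakSharpMin hF hmin hK hweak

/-- Theorem 4.1: if the lower level problem is a linear program
`min_y { cᵀy | A(x) + By ≤ 0 }` with fixed `c`, `B` and continuous right-hand side
perturbation `A`, then (BPP) is partially calm at any of its local minimizers. -/
theorem partial_calmness_fully_linear_lower_level {n m q : ℕ}
    (F : (Fin n → ℝ) → (Fin m → ℝ) → ℝ) (X : Set (Fin n → ℝ))
    (c : Fin m → ℝ) (B : Fin q → Fin m → ℝ) (A : (Fin n → ℝ) → Fin q → ℝ)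
    (hF : LocallyLipschitz fun p : (Fin n → ℝ) × (Fin m → ℝ) => F p.1 p.2)
    (hXne : X.Nonempty) (hXcl : IsClosed X)
    (hA : Continuous A)
    (xb : Fin n → ℝ) (yb : Fin m → ℝ)
    (hmin : IsLocalMinBPP F X (fun _ y => ∑ j, c j * y j)
      (fun x y i => A x i + ∑ j, B i j * y j) xb yb) :
    PartiallyCalm F X (fun _ y => ∑ j, c j * y j)
      (fun x y i => A x i + ∑ j, B i j * y j) xb yb :=
  partial_calmness_fully_linear_lower_level_general F X c B A hF xb yb hmin
end

section
/- Let c ∈ ℝᵐ and B ∈ ℝ^{q×m} be fixed and let A : ℝⁿ → ℝ^q be continuous. Then the parametric linear program min_y { cᵀy | A(x) + By ≤ 0 } possesses a uniformly weak sharp minimum: there exists M > 0 such that for every (x,y) ∈ ℝⁿ×ℝᵐ with A(x) + By ≤ 0 and φ(x) > −∞, the solution set S(x) is nonempty and dist(y, S(x)) ≤ M·(cᵀy − φ(x)). -/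
open Filter Topology
open scoped ENNReal NNReal

theorem hoffman_lemma (m : ℕ) : ∀ (ι : Type) [Fintype ι] (D : ι → Fin m → ℝ),
    ∃ M : ℝ, 0 < M ∧ ∀ (b : ι → ℝ) (y : Fin m → ℝ) (r : ℝ), 0 ≤ r →
      (∀ i, ∑ j, D i j * y j ≤ b i + r) →
      (∃ z : Fin m → ℝ, ∀ i, ∑ j, D i j * z j ≤ b i) →
      ∃ z : Fin m → ℝ, (∀ i, ∑ j, D i j * z j ≤ b i) ∧ ∀ j, |y j - z j| ≤ M * r := by
  induction m with
  | zero =>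
    intro ι _ D
    refine ⟨1, one_pos, fun b y r hr _ hne => ?_⟩
    obtain ⟨z0, hz0⟩ := hne
    exact ⟨z0, hz0, fun j => j.elim0⟩
  | succ m IH =>
    intro ι _ D
    classical
    set a : ι → ℝ := fun i => D i (Fin.last m) with ha
    set D' : ι → Fin m → ℝ := fun i j => D i j.castSucc with hD'
    set G : ℝ := ∑ i, (if a i = 0 then 0 else |a i|⁻¹) with hGdef
    have hGnn : 0 ≤ G := Finset.sum_nonneg (fun i _ => by
      by_cases h : a i = 0 <;> simp [h] <;> positivity)
    have hG : ∀ i, a i ≠ 0 → |a i|⁻¹ ≤ G := by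
      intro i hi
      have := Finset.single_le_sum (f := fun i => if a i = 0 then 0 else |a i|⁻¹)
        (fun i _ => by by_cases h : a i = 0 <;> simp [h] <;> positivity) (Finset.mem_univ i)
      simpa [hi] using this
    set K : ℝ := ∑ i, (if a i = 0 then 0 else (∑ j, |D' i j|) * |a i|⁻¹) with hKdef
    have hKnn : 0 ≤ K := Finset.sum_nonneg (fun i _ => by
      by_cases h : a i = 0 <;> simp [h] <;> positivity)
    have hK : ∀ i, a i ≠ 0 → (∑ j, |D' i j|) * |a i|⁻¹ ≤ K := by
      intro i hi
      have := Finset.single_le_sum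
        (f := fun i => if a i = 0 then 0 else (∑ j, |D' i j|) * |a i|⁻¹)
        (fun i _ => by by_cases h : a i = 0 <;> simp [h] <;> positivity) (Finset.mem_univ i)
      simpa [hi] using this
    set C : ℝ := 1 + 2 * G with hCdef
    have hC1 : 1 ≤ C := by linarith
    have hCpos : 0 < C := by linarith
    set E : (ι × ι ⊕ ι) → Fin m → ℝ := Sum.elim
      (fun p j => if 0 < a p.1 ∧ a p.2 < 0 then D' p.1 j / a p.1 - D' p.2 j / a p.2 else 0)
      (fun i j => if a i = 0 then D' i j else 0) with hE
    obtain ⟨M', hM'pos, hM'⟩ := IH (ι × ι ⊕ ι) E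
    have hMCpos : 0 < M' * C := mul_pos hM'pos hCpos
    refine ⟨M' * C + K * (M' * C) + G + 1, by linarith [mul_nonneg hKnn hMCpos.le], ?_⟩
    intro b y r hr hres hne
    obtain ⟨z0, hz0⟩ := hne
    set β : (ι × ι ⊕ ι) → ℝ := Sum.elim
      (fun p => if 0 < a p.1 ∧ a p.2 < 0 then b p.1 / a p.1 - b p.2 / a p.2 else 0)
      (fun i => if a i = 0 then b i else 0) with hβ
    have hsum : ∀ (i : ι) (w : Fin (m+1) → ℝ),
        ∑ j, D i j * w j = (∑ j, D' i j * w j.castSucc) + a i * w (Fin.last m) := by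
      intro i w
      simp only [hD', ha]
      exact Fin.sum_univ_castSucc (fun j => D i j * w j)
    -- residual transfer to the eliminated system
    have htrans : ∀ (w : Fin (m+1) → ℝ) (s : ℝ), 0 ≤ s →
        (∀ i, ∑ j, D i j * w j ≤ b i + s) →
        ∀ p, ∑ j, E p j * w j.castSucc ≤ β p + C * s := by
      intro w s hs hw p
      rcases p with ⟨i, i'⟩ | i
      · by_cases h : 0 < a i ∧ a i' < 0
        · obtain ⟨hp, hn⟩ := h
          have h1 := hw i
          have h2 := hw i'
          rw [hsum] at h1 h2
          simp only [hE, hβ, Sum.elim_inl, if_pos (And.intro hp hn)]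
          have hsplit : ∑ j, (D' i j / a i - D' i' j / a i') * w j.castSucc
              = (∑ j, D' i j * w j.castSucc) / a i
                - (∑ j, D' i' j * w j.castSucc) / a i' := by
            rw [Finset.sum_div, Finset.sum_div, ← Finset.sum_sub_distrib]
            congr 1
            ext j
            ring
          rw [hsplit]
          set S1 := ∑ j, D' i j * w j.castSucc with hS1
          set S2 := ∑ j, D' i' j * w j.castSucc with hS2
          have e1 : S1 / a i + w (Fin.last m) ≤ (b i + s) / a i := by
            rw [div_add' _ _ _ hp.ne', div_le_div_iff_of_pos_right hp]
            linarith
          have e2 : (b i' + s) / a i' ≤ S2 / a i' + w (Fin.last m) := by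
            rw [div_add' _ _ _ hn.ne, div_le_div_right_of_neg hn]
            linarith
          have g1 : (a i)⁻¹ ≤ G := by
            have := hG i hp.ne'
            rwa [abs_of_pos hp] at this
          have g2 : -(a i')⁻¹ ≤ G := by
            have := hG i' hn.ne
            rwa [abs_of_neg hn, inv_neg] at this
          have m1 : s * (a i)⁻¹ ≤ s * G := mul_le_mul_of_nonneg_left g1 hs
          have m2 : s * (-(a i')⁻¹) ≤ s * G := mul_le_mul_of_nonneg_left g2 hs
          rw [mul_neg] at m2
          have hCs : C * s = s + 2 * (s * G) := by rw [hCdef]; ring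
          have hx1 : (b i + s) / a i = b i / a i + s * (a i)⁻¹ := by
            ring
          have hx2 : (b i' + s) / a i' = b i' / a i' + s * (a i')⁻¹ := by
            ring
          linarith [e1, e2]
        · simp only [hE, hβ, Sum.elim_inl, if_neg h]
          have : (0:ℝ) ≤ C * s := mul_nonneg hCpos.le hs
          simpa using this
      · by_cases h0 : a i = 0
        · have h1 := hw i
          rw [hsum, h0] at h1
          simp only [hE, hβ, Sum.elim_inr, if_pos h0]
          have : s ≤ C * s := by
            have h2 := mul_le_mul_of_nonneg_right hC1 hs
            rwa [one_mul] at h2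
          linarith
        · simp only [hE, hβ, Sum.elim_inr, if_neg h0]
          have : (0:ℝ) ≤ C * s := mul_nonneg hCpos.le hs
          simpa using this
    have hnonE : ∃ z' : Fin m → ℝ, ∀ p, ∑ j, E p j * z' j ≤ β p := by
      refine ⟨fun j => z0 j.castSucc, fun p => ?_⟩
      have := htrans z0 0 le_rfl (by simpa using hz0) p
      simpa using this
    obtain ⟨z', hz'1, hz'2⟩ := hM' β (fun j => y j.castSucc) (C * r)
      (mul_nonneg hCpos.le hr) (htrans y r hr hres) hnonE
    set T : ι → ℝ := fun i => ∑ j, D' i j * z' j with hT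
    set Ty : ι → ℝ := fun i => ∑ j, D' i j * y j.castSucc with hTy
    have hTdiff : ∀ i, |Ty i - T i| ≤ (∑ j, |D' i j|) * (M' * (C * r)) := by
      intro i
      have heq : Ty i - T i = ∑ j, D' i j * (y j.castSucc - z' j) := by
        rw [hTy, hT, ← Finset.sum_sub_distrib]
        congr 1
        ext j
        ring
      rw [heq]
      calc |∑ j, D' i j * (y j.castSucc - z' j)| ≤ ∑ j, |D' i j * (y j.castSucc - z' j)| :=
            Finset.abs_sum_le_sum_abs _ _
        _ ≤ ∑ j, |D' i j| * (M' * (C * r)) := Finset.sum_le_sum (fun j _ => by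
            rw [abs_mul]
            exact mul_le_mul_of_nonneg_left (hz'2 j) (abs_nonneg _))
        _ = (∑ j, |D' i j|) * (M' * (C * r)) := by rw [Finset.sum_mul]
    set ym : ℝ := y (Fin.last m) with hym
    set δ : ℝ := (K * (M' * C) + G) * r with hδ
    have hδnn : 0 ≤ δ := by
      have : 0 ≤ K * (M' * C) + G := by linarith [mul_nonneg hKnn hMCpos.le]
      exact mul_nonneg this hr
    -- per-row claims
    have claimU : ∀ i, 0 < a i → ym - δ ≤ (b i - T i) / a i := by
      intro i hp
      rw [le_div_iff₀ hp]
      have h1 := hres i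
      rw [hsum] at h1
      have h2 := (abs_le.mp (hTdiff i)).1
      have key1 : (∑ j, |D' i j|) ≤ K * a i := by
        have := hK i hp.ne'
        rw [abs_of_pos hp, ← div_eq_mul_inv, div_le_iff₀ hp] at this
        linarith
      have key2 : (1:ℝ) ≤ G * a i := by
        have := hG i hp.ne'
        rw [abs_of_pos hp, ← one_div, div_le_iff₀ hp] at this
        linarith
      have t1 : (∑ j, |D' i j|) * (M' * (C * r)) ≤ K * a i * (M' * (C * r)) :=
        mul_le_mul_of_nonneg_right key1 (by positivity)
      have t2 : r * 1 ≤ r * (G * a i) := mul_le_mul_of_nonneg_left key2 hr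
      rw [mul_one] at t2
      have hring : (ym - δ) * a i
          = a i * ym - K * a i * (M' * (C * r)) - r * (G * a i) := by
        rw [hδ]; ring
      linarith
    have claimL : ∀ i, a i < 0 → (b i - T i) / a i ≤ ym + δ := by
      intro i hn
      rw [div_le_iff_of_neg hn]
      have h1 := hres i
      rw [hsum] at h1
      have h2 := (abs_le.mp (hTdiff i)).1
      have key1 : (∑ j, |D' i j|) ≤ K * (-(a i)) := by
        have := hK i hn.ne
        rw [abs_of_neg hn, ← div_eq_mul_inv, div_le_iff₀ (by linarith : (0:ℝ) < -a i)] at this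
        linarith
      have key2 : (1:ℝ) ≤ G * (-(a i)) := by
        have := hG i hn.ne
        rw [abs_of_neg hn, ← one_div, div_le_iff₀ (by linarith : (0:ℝ) < -a i)] at this
        linarith
      have t1 : (∑ j, |D' i j|) * (M' * (C * r)) ≤ K * (-(a i)) * (M' * (C * r)) :=
        mul_le_mul_of_nonneg_right key1 (by positivity)
      have t2 : r * 1 ≤ r * (G * (-(a i))) := mul_le_mul_of_nonneg_left key2 hr
      rw [mul_one] at t2
      have hring : (ym + δ) * a i
          = a i * ym - K * (-(a i)) * (M' * (C * r)) - r * (G * (-(a i))) := by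
        rw [hδ]; ring
      linarith
    have claimLU : ∀ i i', 0 < a i → a i' < 0 → (b i' - T i') / a i' ≤ (b i - T i) / a i := by
      intro i i' hp hn
      have h := hz'1 (Sum.inl (i, i'))
      simp only [hE, hβ, Sum.elim_inl, if_pos (And.intro hp hn)] at h
      have hsplit : ∑ j, (D' i j / a i - D' i' j / a i') * z' j
          = T i / a i - T i' / a i' := by
        rw [hT, Finset.sum_div, Finset.sum_div, ← Finset.sum_sub_distrib]
        congr 1
        ext j
        ring
      rw [hsplit] at h
      rw [sub_div, sub_div]
      linarith
    -- choose the last coordinate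
    set Pos : Finset ι := Finset.univ.filter (fun i => 0 < a i) with hPos
    set Neg : Finset ι := Finset.univ.filter (fun i => a i < 0) with hNeg
    set U : ι → ℝ := fun i => (b i - T i) / a i with hU
    set infU : ℝ := if h : Pos.Nonempty then Pos.inf' h U else ym with hinfU
    set supL : ℝ := if h : Neg.Nonempty then Neg.sup' h U else min ym infU with hsupL
    set t : ℝ := max (min ym infU) supL with htdef
    have hmemPos : ∀ i, 0 < a i → i ∈ Pos := fun i hi => by
      simp [hPos, hi]
    have hmemNeg : ∀ i, a i < 0 → i ∈ Neg := fun i hi => by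
      simp [hNeg, hi]
    have hposA : ∀ i ∈ Pos, 0 < a i := fun i hi => by
      simp [hPos] at hi; exact hi
    have hnegA : ∀ i ∈ Neg, a i < 0 := fun i hi => by
      simp [hNeg] at hi; exact hi
    have hinfU_le : ∀ i, 0 < a i → infU ≤ U i := by
      intro i hi
      have hne : Pos.Nonempty := ⟨i, hmemPos i hi⟩
      rw [hinfU, dif_pos hne]
      exact Finset.inf'_le U (hmemPos i hi)
    have hinfU_lb : ym - δ ≤ infU := by
      rw [hinfU]
      split_ifs with h
      · exact Finset.le_inf' h U (fun i hi => claimU i (hposA i hi))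
      · linarith
    have hsupL_ub : supL ≤ ym + δ := by
      rw [hsupL]
      split_ifs with h
      · exact Finset.sup'_le h U (fun i hi => claimL i (hnegA i hi))
      · calc min ym infU ≤ ym := min_le_left _ _
          _ ≤ ym + δ := by linarith
    have hUt : ∀ i, 0 < a i → t ≤ U i := by
      intro i hi
      rw [htdef]
      apply max_le
      · exact le_trans (min_le_right _ _) (hinfU_le i hi)
      · rw [hsupL]
        split_ifs with h
        · exact Finset.sup'_le h U (fun i' hi' => claimLU i i' hi (hnegA i' hi'))
        · exact le_trans (min_le_right _ _) (hinfU_le i hi)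
    have hLt : ∀ i, a i < 0 → U i ≤ t := by
      intro i hi
      have hne : Neg.Nonempty := ⟨i, hmemNeg i hi⟩
      rw [htdef, hsupL, dif_pos hne]
      exact le_trans (Finset.le_sup' U (hmemNeg i hi)) (le_max_right _ _)
    have htbound : |ym - t| ≤ δ := by
      rw [abs_le]
      constructor
      · have : t ≤ ym + δ := by
          rw [htdef]
          apply max_le
          · calc min ym infU ≤ ym := min_le_left _ _
              _ ≤ ym + δ := by linarith
          · exact hsupL_ub
        linarith
      · have : ym - δ ≤ t := by
          rw [htdef]
          refine le_trans (le_min (by linarith) hinfU_lb) (le_max_left _ _)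
        linarith
    -- assemble the solution
    refine ⟨Fin.snoc z' t, ?_, ?_⟩
    · intro i
      rw [hsum]
      have hlast : (Fin.snoc z' t : Fin (m+1) → ℝ) (Fin.last m) = t := Fin.snoc_last _ _
      have hcs : ∀ j : Fin m, (Fin.snoc z' t : Fin (m+1) → ℝ) j.castSucc = z' j :=
        fun j => Fin.snoc_castSucc _ _ _
      have hTsum : (∑ j, D' i j * (Fin.snoc z' t : Fin (m+1) → ℝ) j.castSucc) = T i := by
        rw [hT]
        exact Finset.sum_congr rfl (fun j _ => by rw [hcs j])
      rw [hTsum, hlast]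
      rcases lt_trichotomy (a i) 0 with hn | h0 | hp
      · have h1 : U i ≤ t := hLt i hn
        have : a i * t ≤ a i * U i := mul_le_mul_of_nonpos_left h1 hn.le
        have h2 : a i * U i = b i - T i := by
          rw [hU, mul_div_cancel₀]
          exact hn.ne
        linarith
      · have h := hz'1 (Sum.inr i)
        simp only [hE, hβ, Sum.elim_inr, if_pos h0] at h
        rw [h0]
        have : (∑ j, D' i j * z' j) = T i := by rw [hT]
        rw [this] at h
        linarith
      · have h1 : t ≤ U i := hUt i hp
        have : a i * t ≤ a i * U i := mul_le_mul_of_nonneg_left h1 hp.le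
        have h2 : a i * U i = b i - T i := by
          rw [hU, mul_div_cancel₀]
          exact hp.ne'
        linarith
    · intro j
      have hMbig1 : M' * C ≤ M' * C + K * (M' * C) + G + 1 := by
        linarith [mul_nonneg hKnn hMCpos.le]
      have hMbig2 : K * (M' * C) + G ≤ M' * C + K * (M' * C) + G + 1 := by
        linarith [mul_nonneg hKnn hMCpos.le]
      refine Fin.lastCases ?_ ?_ j
      · rw [Fin.snoc_last]
        calc |y (Fin.last m) - t| = |ym - t| := by rw [hym]
          _ ≤ δ := htbound
          _ = (K * (M' * C) + G) * r := hδ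
          _ ≤ (M' * C + K * (M' * C) + G + 1) * r := mul_le_mul_of_nonneg_right hMbig2 hr
      · intro j
        rw [Fin.snoc_castSucc]
        calc |y j.castSucc - z' j| ≤ M' * (C * r) := hz'2 j
          _ = (M' * C) * r := by ring
          _ ≤ (M' * C + K * (M' * C) + G + 1) * r := mul_le_mul_of_nonneg_right hMbig1 hr

theorem lp_attain {m : ℕ} {ι : Type} [Fintype ι] (D : ι → Fin m → ℝ) (c : Fin m → ℝ)
    (b : ι → ℝ) (φ : ℝ)
    (hlb : ∀ z : Fin m → ℝ, (∀ i, ∑ j, D i j * z j ≤ b i) → φ ≤ ∑ j, c j * z j)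
    (happrox : ∀ ε : ℝ, 0 < ε → ∃ z : Fin m → ℝ,
      (∀ i, ∑ j, D i j * z j ≤ b i) ∧ ∑ j, c j * z j < φ + ε) :
    ∃ z : Fin m → ℝ, (∀ i, ∑ j, D i j * z j ≤ b i) ∧ ∑ j, c j * z j ≤ φ := by
  classical
  set Dh : (ι ⊕ Unit) → Fin m → ℝ := Sum.elim D (fun _ => c) with hDh
  obtain ⟨M, hMpos, hM⟩ := hoffman_lemma m (ι ⊕ Unit) Dh
  set P : ℕ → Set (Fin m → ℝ) := fun k =>
    {z | (∀ i, ∑ j, D i j * z j ≤ b i) ∧ ∑ j, c j * z j ≤ φ + (2⁻¹ : ℝ) ^ k} with hP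
  have hpow : ∀ k : ℕ, (0:ℝ) < (2⁻¹:ℝ)^k := fun k => by positivity
  have hPne : ∀ k, (P k).Nonempty := by
    intro k
    obtain ⟨z, hz1, hz2⟩ := happrox ((2⁻¹:ℝ)^k) (hpow k)
    exact ⟨z, hz1, hz2.le⟩
  have hstep : ∀ k : ℕ, ∀ w, w ∈ P k →
      ∃ w', w' ∈ P (k+1) ∧ dist w' w ≤ M * (2⁻¹:ℝ)^(k+1) := by
    intro k w hw
    obtain ⟨z0, hz01, hz02⟩ := hPne (k+1)
    have hres : ∀ i : ι ⊕ Unit, ∑ j, Dh i j * w j ≤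
        Sum.elim b (fun _ => φ + (2⁻¹:ℝ)^(k+1)) i + (2⁻¹:ℝ)^(k+1) := by
      rintro (i | u)
      · simp only [hDh, Sum.elim_inl]
        linarith [hw.1 i, hpow (k+1)]
      · have h1 : ∑ j, c j * w j ≤ φ + (2⁻¹:ℝ)^k := hw.2
        have hgeom : (2⁻¹:ℝ)^k = (2⁻¹:ℝ)^(k+1) + (2⁻¹:ℝ)^(k+1) := by ring
        simp only [hDh, Sum.elim_inr]
        linarith
    have hnon : ∃ z : Fin m → ℝ, ∀ i, ∑ j, Dh i j * z j ≤
        Sum.elim b (fun _ => φ + (2⁻¹:ℝ)^(k+1)) i := by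
      refine ⟨z0, ?_⟩
      rintro (i | u)
      · simp only [hDh, Sum.elim_inl]
        exact hz01 i
      · simp only [hDh, Sum.elim_inr]
        exact hz02
    obtain ⟨z, hz1, hz2⟩ := hM _ w ((2⁻¹:ℝ)^(k+1)) (hpow _).le hres hnon
    have hMr : 0 ≤ M * (2⁻¹:ℝ)^(k+1) := by positivity
    refine ⟨z, ⟨fun i => by simpa [hDh] using hz1 (Sum.inl i),
      by simpa [hDh] using hz1 (Sum.inr ())⟩,
      (dist_pi_le_iff hMr).mpr (fun j => ?_)⟩
    rw [Real.dist_eq, abs_sub_comm]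
    exact hz2 j
  choose! f hf1 hf2 using hstep
  obtain ⟨w0, hw0⟩ := hPne 0
  set W : ℕ → (Fin m → ℝ) := fun k => Nat.rec w0 (fun k wk => f k wk) k with hW
  have hWmem : ∀ k, W k ∈ P k := by
    intro k
    induction k with
    | zero => exact hw0
    | succ k ih => exact hf1 k (W k) ih
  have hWdist : ∀ k, dist (W (k+1)) (W k) ≤ M * (2⁻¹:ℝ)^(k+1) :=
    fun k => hf2 k (W k) (hWmem k)
  have hgs : Summable (fun k : ℕ => (M * 2⁻¹) * (2⁻¹:ℝ)^k) :=
    (summable_geometric_of_lt_one (by norm_num) (by norm_num)).mul_left _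
  have hle : ∀ k : ℕ, dist (W k) (W (k+1)) ≤ (M * 2⁻¹) * (2⁻¹:ℝ)^k := by
    intro k
    calc dist (W k) (W (k+1)) = dist (W (k+1)) (W k) := dist_comm _ _
      _ ≤ M * (2⁻¹:ℝ)^(k+1) := hWdist k
      _ = (M * 2⁻¹) * (2⁻¹:ℝ)^k := by ring
  have hsummable : Summable (fun k => dist (W k) (W (k+1))) :=
    Summable.of_nonneg_of_le (fun k => dist_nonneg) hle hgs
  obtain ⟨z, hz⟩ := cauchySeq_tendsto_of_complete (cauchySeq_of_summable_dist hsummable)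
  have hclosed : ∀ k, IsClosed (P k) := by
    intro k
    have heq : P k = (⋂ i, {z : Fin m → ℝ | ∑ j, D i j * z j ≤ b i}) ∩
        {z : Fin m → ℝ | ∑ j, c j * z j ≤ φ + (2⁻¹:ℝ)^k} := by
      ext w
      simp [hP, Set.mem_iInter]
    rw [heq]
    have hcont : ∀ (d : Fin m → ℝ), Continuous (fun w : Fin m → ℝ => ∑ j, d j * w j) :=
      fun d => continuous_finset_sum _ (fun j _ => continuous_const.mul (continuous_apply j))
    exact (isClosed_iInter (fun i => isClosed_le (hcont (D i)) continuous_const)).inter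
      (isClosed_le (hcont c) continuous_const)
  have hmono : ∀ k l, k ≤ l → P l ⊆ P k := by
    intro k l hkl w hw
    refine ⟨hw.1, hw.2.trans ?_⟩
    have := pow_le_pow_of_le_one (by norm_num : (0:ℝ) ≤ 2⁻¹) (by norm_num) hkl
    linarith
  have hmemP : ∀ k, z ∈ P k := by
    intro k
    apply (hclosed k).mem_of_tendsto hz
    exact Filter.eventually_atTop.mpr ⟨k, fun l hl => hmono k l hl (hWmem l)⟩
  refine ⟨z, (hmemP 0).1, ?_⟩
  by_contra hcon
  push_neg at hcon
  obtain ⟨k, hk⟩ := exists_pow_lt_of_lt_one (by linarith : (0:ℝ) < ∑ j, c j * z j - φ)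
    (by norm_num : (2⁻¹:ℝ) < 1)
  linarith [(hmemP k).2]

/-- Remark 4.3: the parametric linear program `min_y { cᵀy | A(x) + By ≤ 0 }` possesses a
uniformly weak sharp minimum: there is `M > 0` such that for all `(x,y)` with
`A(x) + By ≤ 0` and `φ(x) > −∞`, the set `S(x)` is nonempty and
`dist(y,S(x)) ≤ M·(cᵀy − φ(x))`. -/
theorem uniformly_weak_sharp_minimum_linear {n m q : ℕ}
    (c : Fin m → ℝ) (B : Fin q → Fin m → ℝ) (A : (Fin n → ℝ) → Fin q → ℝ)
    (hA : Continuous A) :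
    ∃ M : ℝ, 0 < M ∧ ∀ (x : Fin n → ℝ) (y : Fin m → ℝ),
      (∀ i, A x i + ∑ j, B i j * y j ≤ 0) →
      phi (fun _ y => ∑ j, c j * y j) (fun x y i => A x i + ∑ j, B i j * y j) x ≠ ⊥ →
      (Sol (fun _ y => ∑ j, c j * y j)
        (fun x y i => A x i + ∑ j, B i j * y j) x).Nonempty ∧
      Metric.infDist y
          (Sol (fun _ y => ∑ j, c j * y j) (fun x y i => A x i + ∑ j, B i j * y j) x) ≤
        M * ((∑ j, c j * y j) -
          (phi (fun _ y => ∑ j, c j * y j)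
            (fun x y i => A x i + ∑ j, B i j * y j) x).toReal) := by
  classical
  obtain ⟨M, hMpos, hM⟩ := hoffman_lemma m (Fin q ⊕ Unit) (Sum.elim B (fun _ => c))
  refine ⟨M, hMpos, ?_⟩
  intro x y hfeas hbot
  set φE : EReal :=
    phi (fun _ y => ∑ j, c j * y j) (fun x y i => A x i + ∑ j, B i j * y j) x with hφE
  have hmemy : ((∑ j, c j * y j : ℝ) : EReal) ∈
      {v : EReal | ∃ z : Fin m → ℝ, (∀ i, A x i + ∑ j, B i j * z j ≤ 0) ∧
        v = ((∑ j, c j * z j : ℝ) : EReal)} := ⟨y, hfeas, rfl⟩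
  have hle : φE ≤ ((∑ j, c j * y j : ℝ) : EReal) := sInf_le hmemy
  have htop : φE ≠ ⊤ := ne_top_of_le_ne_top (EReal.coe_ne_top _) hle
  set φ : ℝ := φE.toReal with hφ
  have hcoe : (φ : EReal) = φE := EReal.coe_toReal htop hbot
  have hlb : ∀ z : Fin m → ℝ, (∀ i, A x i + ∑ j, B i j * z j ≤ 0) → φ ≤ ∑ j, c j * z j := by
    intro z hz
    have h1 : φE ≤ ((∑ j, c j * z j : ℝ) : EReal) := sInf_le ⟨z, hz, rfl⟩
    rw [← hcoe] at h1
    exact_mod_cast h1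
  have happrox : ∀ ε : ℝ, 0 < ε → ∃ z : Fin m → ℝ,
      (∀ i, A x i + ∑ j, B i j * z j ≤ 0) ∧ ∑ j, c j * z j < φ + ε := by
    intro ε hε
    by_contra hcon
    push_neg at hcon
    have hub : ((φ + ε : ℝ) : EReal) ≤ φE := by
      apply le_sInf
      rintro v ⟨z, hz, rfl⟩
      exact_mod_cast hcon z hz
    rw [← hcoe] at hub
    have : φ + ε ≤ φ := by exact_mod_cast hub
    linarith
  have hiff : ∀ (z : Fin m → ℝ) (i : Fin q),
      (A x i + ∑ j, B i j * z j ≤ 0) ↔ ∑ j, B i j * z j ≤ -(A x i) := by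
    intro z i
    constructor <;> intro h <;> linarith
  obtain ⟨zs, hzs1, hzs2⟩ := lp_attain B c (fun i => -(A x i)) φ
    (fun z hz => hlb z (fun i => (hiff z i).mpr (hz i)))
    (fun ε hε => (happrox ε hε).imp (fun z hz => ⟨fun i => (hiff z i).mp (hz.1 i), hz.2⟩))
  have hzsSol : zs ∈ Sol (fun _ y => ∑ j, c j * y j)
      (fun x y i => A x i + ∑ j, B i j * y j) x :=
    ⟨fun i => (hiff zs i).mpr (hzs1 i), fun w hw => le_trans hzs2 (hlb w hw)⟩
  refine ⟨⟨zs, hzsSol⟩, ?_⟩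
  set r : ℝ := (∑ j, c j * y j) - φ with hrdef
  have hrnn : 0 ≤ r := by
    have := hlb y hfeas
    rw [hrdef]
    linarith
  have hres : ∀ i : Fin q ⊕ Unit, ∑ j, Sum.elim B (fun _ => c) i j * y j ≤
      Sum.elim (fun i => -(A x i)) (fun _ => φ) i + r := by
    rintro (i | u)
    · simp only [Sum.elim_inl]
      have := (hiff y i).mp (hfeas i)
      linarith
    · simp only [Sum.elim_inr]
      rw [hrdef]
      linarith
  have hnon : ∃ z : Fin m → ℝ, ∀ i : Fin q ⊕ Unit, ∑ j, Sum.elim B (fun _ => c) i j * z j ≤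
      Sum.elim (fun i => -(A x i)) (fun _ => φ) i := by
    refine ⟨zs, ?_⟩
    rintro (i | u)
    · simpa using hzs1 i
    · simpa using hzs2
  obtain ⟨z, hz1, hz2⟩ := hM _ y r hrnn hres hnon
  have hzSol : z ∈ Sol (fun _ y => ∑ j, c j * y j)
      (fun x y i => A x i + ∑ j, B i j * y j) x := by
    refine ⟨fun i => (hiff z i).mpr (by simpa using hz1 (Sum.inl i)), fun w hw => ?_⟩
    exact le_trans (by simpa using hz1 (Sum.inr ())) (hlb w hw)
  calc Metric.infDist y (Sol (fun _ y => ∑ j, c j * y j)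
        (fun x y i => A x i + ∑ j, B i j * y j) x) ≤ dist y z :=
        Metric.infDist_le_dist_of_mem hzSol
    _ ≤ M * r := (dist_pi_le_iff (mul_nonneg hMpos.le hrnn)).mpr
        (fun j => by rw [Real.dist_eq]; exact hz2 j)
    _ = M * ((∑ j, c j * y j) - φ) := by rw [hrdef]
end

section
/- Let the lower level solution map be S(x) = argmin_y { c(x)ᵀy | A(x) + B(x)y ≤ 0 }, where c : ℝⁿ → ℝᵐ, A : ℝⁿ → ℝ^q, and B : ℝⁿ → ℝ^{q×m} are locally Lipschitz continuous. Fix (x̄,ȳ) ∈ gph S at which S is inner semicontinuous. Let I(x̄,ȳ) = { i ∈ {1,…,q} | A_i(x̄) + (B(x̄)ȳ)_i = 0 } and let 𝓑(x) be the matrix whose rows are c(x)ᵀ together with the rows of B(x) with index in I(x̄,ȳ). Assume there is a neighbourhood U ⊆ ℝⁿ of x̄ such that for every subset J of the row indices of 𝓑, the submatrix 𝓑(x)_J (keeping only the rows in J) has rank independent of x ∈ U. Then the R-regularity constraint qualification (RRCQ) holds at (x̄,ȳ). -/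
open Filter Topology
open scoped ENNReal NNReal

/-- Inner semicontinuity of a set-valued map at a point of its graph. -/
def InnerSemicontinuous {n m : ℕ} (S : (Fin n → ℝ) → Set (Fin m → ℝ))
    (xb : Fin n → ℝ) (yb : Fin m → ℝ) : Prop :=
  ∀ x : ℕ → (Fin n → ℝ), Tendsto x atTop (𝓝 xb) →
    ∃ y : ℕ → (Fin m → ℝ), Tendsto y atTop (𝓝 yb) ∧
      ∀ᶠ k in atTop, y k ∈ S (x k)

/-- The rows of the matrix `𝓑(x)`: the row `c(x)ᵀ` (index `none`) together with the rows
`B(x)_j` (index `some j`, used for `j ∈ I(x̄,ȳ)`). -/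
def Brow {n m q : ℕ} (c : (Fin n → ℝ) → Fin m → ℝ) (B : (Fin n → ℝ) → Fin q → Fin m → ℝ)
    (x : Fin n → ℝ) (io : Option (Fin q)) : Fin m → ℝ :=
  io.elim (c x) (fun j => B x j)


/-!
Near `(x̄,ȳ)` the constraints inactive at `(x̄,ȳ)` stay slack, so near `ȳ` the set `S(x)`
coincides with the polyhedron `{y | c(x)ᵀy ≤ φ(x), B_j(x)y ≤ -A_j(x) for j ∈ I(x̄,ȳ)}`, whose
rows are those of `𝓑(x)`.

Hoffman's error bound for a polyhedron `{z | ⟪w_i, z⟫ ≤ b_i}` and a point `t` with residuals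
`⟪w_i, t⟫ - b_i ≤ R`: if `p` is the projection of `t`, then by Farkas `t - p = ∑ u_i w_i` with
`u ≥ 0` over active rows, and by Carathéodory over linearly independent ones; hence
`‖t - p‖² = ∑ u_i (⟪w_i, t⟫ - b_i) ≤ (∑ u_i) R ≤ C ‖t - p‖ R`, where `C` bounds
`∑ u_i / ‖∑ u_i w_i‖` on independent subfamilies.

Under the constant rank condition the independent subfamilies of rows of `𝓑(x)` are the same
for all `x` in a compact neighbourhood of `x̄`, so compactness makes `C` uniform in `x`. This
gives the RRCQ estimate when the residual is small. When it is not, inner semicontinuity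
provides a solution within bounded distance of `y`, and a large enough `κ` absorbs that
distance.
-/

open scoped RealInnerProductSpace

section ConicCaratheodory

variable {ι E : Type*} [AddCommGroup E] [Module ℝ E]

def finsetCone (w : ι → E) (s : Finset ι) : PointedCone ℝ E where
  carrier := {v | ∃ u : ι → ℝ, (∀ i ∈ s, 0 ≤ u i) ∧ ∑ i ∈ s, u i • w i = v}
  add_mem' := by
    rintro _ _ ⟨u, hu, rfl⟩ ⟨u', hu', rfl⟩
    exact ⟨u + u', fun i hi => add_nonneg (hu i hi) (hu' i hi), by
      simp only [Pi.add_apply, add_smul, Finset.sum_add_distrib]⟩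
  zero_mem' := ⟨0, fun _ _ => le_rfl, by simp⟩
  smul_mem' := by
    rintro c _ ⟨u, hu, rfl⟩
    exact ⟨(c : ℝ) • u, fun i hi => mul_nonneg c.2 (hu i hi), by
      simp [Finset.smul_sum, mul_smul]⟩

variable {w : ι → E} {s t : Finset ι} {v : E}

theorem mem_finsetCone_of_mem {i : ι} (hi : i ∈ s) : w i ∈ finsetCone w s := by
  classical
  exact ⟨Pi.single i 1, fun j _ => by by_cases h : j = i <;> simp [h], by
    simp [Pi.single_apply, ite_smul, hi]⟩

theorem finsetCone_mono (h : s ⊆ t) : finsetCone w s ≤ finsetCone w t := by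
  classical
  rintro _ ⟨u, hu, rfl⟩
  refine ⟨fun i => if i ∈ s then u i else 0, fun i _ => ?_, ?_⟩
  · dsimp only
    split_ifs with hi
    exacts [hu i hi, le_rfl]
  · rw [← Finset.sum_subset h fun i _ hi => by simp [hi]]
    exact Finset.sum_congr rfl fun i hi => by simp [hi]

/-- One step of the conic Carathéodory theorem: a linear dependence among the generators lets
one coefficient be driven to zero while all stay nonnegative. -/
theorem exists_mem_finsetCone_erase [DecidableEq ι] (hv : v ∈ finsetCone w s)
    (hs : ¬LinearIndepOn ℝ w s) :
    ∃ i ∈ s, v ∈ finsetCone w (s.erase i) := by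
  obtain ⟨u, hu, rfl⟩ := hv
  obtain ⟨g, hg, i₁, hi₁s, hi₁⟩ := not_linearIndepOn_finset_iff.1 hs
  wlog hpos : 0 < g i₁ generalizing g
  · exact this (-g) (by simp [neg_smul, Finset.sum_neg_distrib, hg]) (neg_ne_zero.2 hi₁)
      (neg_pos.2 (lt_of_le_of_ne (not_lt.1 hpos) hi₁))
  obtain ⟨i₀, hi₀, hmin⟩ := (s.filter (0 < g ·)).exists_min_image (fun i => u i / g i)
    ⟨i₁, Finset.mem_filter.2 ⟨hi₁s, hpos⟩⟩
  rw [Finset.mem_filter] at hi₀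
  set τ := u i₀ / g i₀
  have hτ : 0 ≤ τ := div_nonneg (hu i₀ hi₀.1) hi₀.2.le
  refine ⟨i₀, hi₀.1, u - τ • g, fun i hi => ?_, ?_⟩
  · have hi := Finset.mem_of_mem_erase hi
    simp only [Pi.sub_apply, Pi.smul_apply, smul_eq_mul, sub_nonneg]
    rcases le_or_gt (g i) 0 with hgi | hgi
    · exact (mul_nonpos_of_nonneg_of_nonpos hτ hgi).trans (hu i hi)
    · exact (le_div_iff₀ hgi).1 (hmin i (Finset.mem_filter.2 ⟨hi, hgi⟩))
  · rw [Finset.sum_erase s (by simp [τ, div_mul_cancel₀ _ hi₀.2.ne'])]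
    simp [sub_smul, Finset.sum_sub_distrib, mul_smul, ← Finset.smul_sum, hg]

theorem exists_linearIndepOn_of_mem_finsetCone (hv : v ∈ finsetCone w s) :
    ∃ t ⊆ s, LinearIndepOn ℝ w (t : Set ι) ∧ v ∈ finsetCone w t := by
  classical
  induction s using Finset.strongInduction with
  | H s ih =>
    by_cases hs : LinearIndepOn ℝ w (s : Set ι)
    · exact ⟨s, subset_rfl, hs, hv⟩
    obtain ⟨i, hi, hv'⟩ := exists_mem_finsetCone_erase hv hs
    obtain ⟨t, hts, ht, hvt⟩ := ih _ (Finset.erase_ssubset hi) hv'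
    exact ⟨t, hts.trans (Finset.erase_subset _ _), ht, hvt⟩

end ConicCaratheodory

section Closed

variable {ι E : Type*} [NormedAddCommGroup E] [NormedSpace ℝ E] {w : ι → E}

theorem coe_finsetCone_eq_image (w : ι → E) (s : Finset ι) :
    (finsetCone w s : Set E) = Fintype.linearCombination ℝ (fun i : s => w i) '' Set.Ici 0 := by
  classical
  ext v
  constructor
  · rintro ⟨u, hu, rfl⟩
    refine ⟨fun i => u i, fun i => hu i i.2, ?_⟩
    rw [Fintype.linearCombination_apply]
    exact Finset.sum_coe_sort s fun i => u i • w i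
  · rintro ⟨u, hu, rfl⟩
    refine ⟨fun i => if h : i ∈ s then u ⟨i, h⟩ else 0,
      fun i hi => by simpa [hi] using hu ⟨i, hi⟩, ?_⟩
    rw [Fintype.linearCombination_apply, ← Finset.sum_coe_sort s]
    exact Finset.sum_congr rfl fun i _ => by simp

theorem isClosed_finsetCone_of_linearIndepOn {s : Finset ι} (hs : LinearIndepOn ℝ w (s : Set ι)) :
    IsClosed (finsetCone w s : Set E) := by
  rw [coe_finsetCone_eq_image]
  refine (LinearMap.isClosedEmbedding_of_injective ?_).isClosedMap _ isClosed_Ici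
  exact LinearMap.ker_eq_bot.2 (linearIndependent_iff_injective_fintypeLinearCombination.1 hs)

/-- A finitely generated cone is closed: by Carathéodory it is a finite union of cones over
linearly independent families, each the image of an orthant under an injective linear map. -/
theorem isClosed_finsetCone (w : ι → E) (s : Finset ι) : IsClosed (finsetCone w s : Set E) := by
  classical
  have : (finsetCone w s : Set E) =
      ⋃ (t : Finset ι) (_ : t ∈ s.powerset.filter fun t : Finset ι =>
        LinearIndepOn ℝ w (t : Set ι)), (finsetCone w t : Set E) := by
    ext v
    simp only [Set.mem_iUnion, Finset.mem_filter, Finset.mem_powerset, SetLike.mem_coe,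
      exists_prop]
    constructor
    · intro hv
      obtain ⟨t, hts, ht, hvt⟩ := exists_linearIndepOn_of_mem_finsetCone hv
      exact ⟨t, ⟨hts, ht⟩, hvt⟩
    · rintro ⟨t, ⟨hts, -⟩, hvt⟩
      exact finsetCone_mono hts hvt
  rw [this]
  exact isClosed_biUnion_finset fun t ht => isClosed_finsetCone_of_linearIndepOn
    (Finset.mem_filter.1 ht).2

end Closed

section Hoffman

variable {ι E : Type*} [NormedAddCommGroup E] [InnerProductSpace ℝ E]

def polyhedron (w : ι → E) (b : ι → ℝ) : Set E := {z | ∀ i, ⟪w i, z⟫ ≤ b i}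

theorem isClosed_polyhedron (w : ι → E) (b : ι → ℝ) : IsClosed (polyhedron w b) := by
  simp only [polyhedron, Set.ofPred_forall]
  exact isClosed_iInter fun i => isClosed_le (continuous_const.inner continuous_id) continuous_const

theorem convex_polyhedron (w : ι → E) (b : ι → ℝ) : Convex ℝ (polyhedron w b) := by
  simp only [polyhedron, Set.ofPred_forall]
  exact convex_iInter fun i => convex_halfSpace_le (innerₛₗ ℝ (w i)).isLinear (b i)

variable [Fintype ι]

noncomputable def activeSet (w : ι → E) (b : ι → ℝ) (z : E) : Finset ι := by
  classical exact Finset.univ.filter fun i => ⟪w i, z⟫ = b i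

variable {w : ι → E} {b : ι → ℝ}

theorem mem_activeSet {z : E} {i : ι} : i ∈ activeSet w b z ↔ ⟪w i, z⟫ = b i := by
  simp [activeSet]

theorem exists_pos_add_smul_mem_polyhedron {p d : E} (hp : p ∈ polyhedron w b)
    (hd : ∀ i ∈ activeSet w b p, ⟪w i, d⟫ ≤ 0) : ∃ ε : ℝ, 0 < ε ∧ p + ε • d ∈ polyhedron w b := by
  have hev : ∀ᶠ ε in 𝓝[>] (0 : ℝ), ∀ i, ⟪w i, p + ε • d⟫ ≤ b i := by
    refine eventually_all.2 fun i => ?_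
    by_cases hi : ⟪w i, p⟫ = b i
    · filter_upwards [self_mem_nhdsWithin] with ε (hε : 0 < ε)
      rw [inner_add_right, real_inner_smul_right, hi]
      nlinarith [hd i (mem_activeSet.2 hi)]
    · have hcont : Continuous fun ε : ℝ => ⟪w i, p + ε • d⟫ := by fun_prop
      have hlim := (hcont.tendsto 0).mono_left (nhdsWithin_le_nhds (s := Set.Ioi 0))
      simp only [zero_smul, add_zero] at hlim
      exact (hlim.eventually_lt_const (lt_of_le_of_ne (hp i) hi)).mono fun _ => le_of_lt
  obtain ⟨ε, hε, hpos⟩ := (hev.and self_mem_nhdsWithin).exists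
  exact ⟨ε, hpos, hε⟩

/-- Farkas' lemma, in the form of the optimality condition for the projection `p` of `t` onto a
polyhedron. -/
theorem sub_mem_finsetCone_activeSet [CompleteSpace E] {p t : E} (hp : p ∈ polyhedron w b)
    (hproj : ∀ z ∈ polyhedron w b, ⟪t - p, z - p⟫ ≤ 0) :
    t - p ∈ finsetCone w (activeSet w b p) := by
  by_contra hnot
  obtain ⟨y, hy, hty⟩ := ProperCone.hyperplane_separation'
    ⟨finsetCone w (activeSet w b p), isClosed_finsetCone w _⟩ hnot
  obtain ⟨ε, hε, hmem⟩ := exists_pos_add_smul_mem_polyhedron (d := -y) hp fun i hi => by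
    simpa [inner_neg_right] using hy _ (mem_finsetCone_of_mem hi)
  have := hproj _ hmem
  rw [add_sub_cancel_left, real_inner_smul_right, inner_neg_right] at this
  nlinarith

/-- Hoffman's error bound. -/
theorem exists_mem_polyhedron_norm_sub_le [CompleteSpace E] {C R : ℝ} (hC : 0 ≤ C) (hR : 0 ≤ R)
    (hmod : ∀ s : Finset ι, LinearIndepOn ℝ w (s : Set ι) → ∀ u : ι → ℝ, (∀ i ∈ s, 0 ≤ u i) →
      ∑ i ∈ s, u i ≤ C * ‖∑ i ∈ s, u i • w i‖)
    (hne : (polyhedron w b).Nonempty) {t : E} (ht : ∀ i, ⟪w i, t⟫ - b i ≤ R) :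
    ∃ p ∈ polyhedron w b, ‖t - p‖ ≤ C * R := by
  obtain ⟨p, hp, hpmin⟩ := exists_norm_eq_iInf_of_complete_convex hne
    (isClosed_polyhedron w b).isComplete (convex_polyhedron w b) t
  have hproj := (norm_eq_iInf_iff_real_inner_le_zero (convex_polyhedron w b) hp).1 hpmin
  obtain ⟨s, hsA, hs, u, hu, hsum⟩ :=
    exists_linearIndepOn_of_mem_finsetCone (sub_mem_finsetCone_activeSet hp hproj)
  have hsq : ‖t - p‖ * ‖t - p‖ ≤ C * R * ‖t - p‖ := calc
    ‖t - p‖ * ‖t - p‖ = ⟪t - p, t - p⟫ := (real_inner_self_eq_norm_mul_norm _).symm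
    _ = ∑ i ∈ s, u i * (⟪w i, t⟫ - b i) := by
      nth_rw 1 [← hsum]
      rw [sum_inner]
      refine Finset.sum_congr rfl fun i hi => ?_
      rw [real_inner_smul_left, inner_sub_right, mem_activeSet.1 (hsA hi)]
    _ ≤ ∑ i ∈ s, u i * R := Finset.sum_le_sum fun i hi => mul_le_mul_of_nonneg_left (ht i) (hu i hi)
    _ = (∑ i ∈ s, u i) * R := (Finset.sum_mul _ _ _).symm
    _ ≤ C * ‖∑ i ∈ s, u i • w i‖ * R := mul_le_mul_of_nonneg_right (hmod s hs u hu) hR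
    _ = C * R * ‖t - p‖ := by rw [hsum]; ring
  refine ⟨p, hp, ?_⟩
  rcases (norm_nonneg (t - p)).eq_or_lt with h | h
  · rw [← h]
    positivity
  · exact le_of_mul_le_mul_right hsq h

end Hoffman

section UniformModulus

variable {X E : Type*} [TopologicalSpace X] [NormedAddCommGroup E] [NormedSpace ℝ E]
  {K : Set X} {κ : Type*} [Fintype κ]

/-- Minimize the norm over `K ×ˢ stdSimplex ℝ κ`, where it is positive. -/
theorem exists_sum_le_mul_norm_sum_smul (hK : IsCompact K) {v : X → κ → E}
    (hv : ∀ i, Continuous fun x => v x i) (hli : ∀ x ∈ K, LinearIndependent ℝ (v x)) :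
    ∃ C, 0 ≤ C ∧ ∀ x ∈ K, ∀ u : κ → ℝ, 0 ≤ u → ∑ i, u i ≤ C * ‖∑ i, u i • v x i‖ := by
  have hcont : Continuous fun p : X × (κ → ℝ) => ‖∑ i, p.2 i • v p.1 i‖ :=
    (continuous_finsetSum _ fun i _ =>
      ((continuous_apply i).comp continuous_snd).smul ((hv i).comp continuous_fst)).norm
  have hpos : ∀ p ∈ K ×ˢ stdSimplex ℝ κ, 0 < ‖∑ i, p.2 i • v p.1 i‖ := by
    rintro ⟨x, u⟩ ⟨hx, -, hu1⟩
    refine norm_pos_iff.2 fun h0 => (one_ne_zero : (1 : ℝ) ≠ 0) ?_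
    rw [← hu1, Finset.sum_eq_zero fun i _ => Fintype.linearIndependent_iff.1 (hli x hx) u h0 i]
  obtain ⟨m, hm, hmle⟩ :=
    (hK.prod (isCompact_stdSimplex ℝ κ)).exists_forall_le' hcont.continuousOn hpos
  refine ⟨m⁻¹, inv_nonneg.2 hm.le, fun x hx u hu => ?_⟩
  rcases (Finset.sum_nonneg fun i _ => hu i : 0 ≤ ∑ i, u i).eq_or_lt with hσ | hσ
  · rw [← hσ]
    positivity
  have hmem : (x, (∑ i, u i)⁻¹ • u) ∈ K ×ˢ stdSimplex ℝ κ :=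
    ⟨hx, fun i => smul_nonneg (inv_nonneg.2 hσ.le) (hu i), by
      simp [← Finset.mul_sum, inv_mul_cancel₀ hσ.ne']⟩
  have := hmle _ hmem
  simp only [Pi.smul_apply, smul_eq_mul, mul_smul, ← Finset.smul_sum, norm_smul,
    Real.norm_eq_abs, abs_inv, abs_of_pos hσ] at this
  rw [← div_eq_inv_mul, le_div_iff₀ hσ] at this
  rw [← div_eq_inv_mul, le_div_iff₀ hm]
  linarith

variable {ι : Type*} [Fintype ι]

theorem exists_uniform_modulus (hK : IsCompact K) {w : X → ι → E}
    (hw : ∀ i, Continuous fun x => w x i)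
    (hcr : ∀ s : Finset ι, ∀ x ∈ K, ∀ x' ∈ K,
      LinearIndepOn ℝ (w x) (s : Set ι) → LinearIndepOn ℝ (w x') (s : Set ι)) :
    ∃ C, 0 ≤ C ∧ ∀ x ∈ K, ∀ s : Finset ι, LinearIndepOn ℝ (w x) (s : Set ι) →
      ∀ u : ι → ℝ, (∀ i ∈ s, 0 ≤ u i) → ∑ i ∈ s, u i ≤ C * ‖∑ i ∈ s, u i • w x i‖ := by
  have hper : ∀ s : Finset ι, ∃ C, 0 ≤ C ∧ ∀ x ∈ K, LinearIndepOn ℝ (w x) (s : Set ι) →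
      ∀ u : ι → ℝ, (∀ i ∈ s, 0 ≤ u i) → ∑ i ∈ s, u i ≤ C * ‖∑ i ∈ s, u i • w x i‖ := by
    intro s
    by_cases hs : ∃ x ∈ K, LinearIndepOn ℝ (w x) (s : Set ι)
    · obtain ⟨x₀, hx₀, h₀⟩ := hs
      obtain ⟨C, hC, hbound⟩ := exists_sum_le_mul_norm_sum_smul hK
        (v := fun x (i : s) => w x i) (fun i => hw i) fun x hx => hcr s x₀ hx₀ x hx h₀
      refine ⟨C, hC, fun x hx _ u hu => ?_⟩
      simpa only [Finset.sum_coe_sort s u, Finset.sum_coe_sort s fun i => u i • w x i] using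
        hbound x hx (fun i => u i) fun i => hu i i.2
    · exact ⟨0, le_rfl, fun x hx h => absurd ⟨x, hx, h⟩ hs⟩
  choose C hC hbound using hper
  refine ⟨∑ s, C s, Finset.sum_nonneg fun s _ => hC s, fun x hx s hs u hu =>
    (hbound s x hx hs u hu).trans ?_⟩
  gcongr
  exact Finset.single_le_sum (fun s _ => hC s) (Finset.mem_univ s)

end UniformModulus

theorem exists_uniform_hoffman_bound {X E ι : Type*} [TopologicalSpace X]
    [NormedAddCommGroup E] [InnerProductSpace ℝ E] [CompleteSpace E] [Fintype ι] {K : Set X}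
    (hK : IsCompact K) {w : X → ι → E} (hw : ∀ i, Continuous fun x => w x i)
    (hcr : ∀ s : Finset ι, ∀ x ∈ K, ∀ x' ∈ K,
      LinearIndepOn ℝ (w x) (s : Set ι) → LinearIndepOn ℝ (w x') (s : Set ι)) :
    ∃ C, 0 ≤ C ∧ ∀ x ∈ K, ∀ b : ι → ℝ, (polyhedron (w x) b).Nonempty → ∀ (t : E) (R : ℝ),
      0 ≤ R → (∀ i, ⟪w x i, t⟫ - b i ≤ R) → ∃ p ∈ polyhedron (w x) b, ‖t - p‖ ≤ C * R := by
  obtain ⟨C, hC, hmod⟩ := exists_uniform_modulus hK hw hcr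
  exact ⟨C, hC, fun x hx b hne t R hR ht =>
    exists_mem_polyhedron_norm_sub_le hC hR (hmod x hx) hne ht⟩

theorem LinearIndepOn.of_finrank_span_image_eq {K V ι : Type*} [DivisionRing K] [AddCommGroup V]
    [Module K V] {v v' : ι → V} {s : Finset ι}
    (h : Module.finrank K (Submodule.span K (v '' s)) =
      Module.finrank K (Submodule.span K (v' '' s)))
    (hv : LinearIndepOn K v (s : Set ι)) : LinearIndepOn K v' (s : Set ι) := by
  rw [LinearIndepOn, linearIndependent_iff_card_eq_finrank_span, Set.finrank,
    ← Set.image_eq_range] at hv ⊢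
  rwa [← h]

theorem linearIndepOn_toLp_iff {K V ι : Type*} [Ring K] [AddCommGroup V] [Module K V]
    {p : ℝ≥0∞} {v : ι → V} {s : Set ι} :
    LinearIndepOn K (fun i => WithLp.toLp p (v i)) s ↔ LinearIndepOn K v s :=
  (WithLp.linearEquiv p K V).symm.toLinearMap.linearIndependent_iff (LinearEquiv.ker _)

theorem eventually_nonpos_of_ne_zero {P ι : Type*} [TopologicalSpace P] [Finite ι]
    {F : P → ι → ℝ} {p₀ : P} (hF : ∀ i, ContinuousAt (fun p => F p i) p₀)
    (h₀ : ∀ i, F p₀ i ≤ 0) : ∀ᶠ p in 𝓝 p₀, ∀ i, F p₀ i ≠ 0 → F p i ≤ 0 := by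
  refine eventually_all.2 fun i => ?_
  by_cases hi : F p₀ i = 0
  · exact Eventually.of_forall fun _ h => absurd hi h
  · exact ((hF i).eventually_lt_const (lt_of_le_of_ne (h₀ i) hi)).mono fun _ hp _ => hp.le

theorem Metric.infDist_le_add_div_mul {α : Type*} [PseudoMetricSpace α] {s : Set α}
    {y z : α} (hz : z ∈ s) {C D R ρ : ℝ} (hC : 0 ≤ C) (hρ : 0 < ρ) (hR : 0 ≤ R)
    (hD : dist y z ≤ D) (hloc : R ≤ ρ → Metric.infDist y s ≤ C * R) :
    Metric.infDist y s ≤ (C + D / ρ) * R := by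
  rcases le_or_gt R ρ with hRρ | hRρ
  · have : 0 ≤ D / ρ * R := mul_nonneg (div_nonneg (dist_nonneg.trans hD) hρ.le) hR
    nlinarith [hloc hRρ]
  · calc Metric.infDist y s ≤ D := (Metric.infDist_le_dist_of_mem hz).trans hD
      _ ≤ D / ρ * R := by
        rw [div_mul_eq_mul_div, le_div_iff₀ hρ]
        exact mul_le_mul_of_nonneg_left hRρ.le (dist_nonneg.trans hD)
      _ ≤ (C + D / ρ) * R := by nlinarith

theorem InnerSemicontinuous.eventually_exists_dist_lt {n m : ℕ}
    {S : (Fin n → ℝ) → Set (Fin m → ℝ)} {xb : Fin n → ℝ} {yb : Fin m → ℝ}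
    (h : InnerSemicontinuous S xb yb) {δ : ℝ} (hδ : 0 < δ) :
    ∀ᶠ x in 𝓝 xb, ∃ y ∈ S x, dist y yb < δ := by
  by_contra hnot
  obtain ⟨xs, hxs, hfar⟩ := frequently_iff_seq_forall.1 (not_eventually.1 hnot)
  obtain ⟨ys, hys, hmem⟩ := h xs hxs
  obtain ⟨k, hk, hkδ⟩ := (hmem.and (Metric.tendsto_nhds.1 hys δ hδ)).exists
  exact hfar k ⟨ys k, hk, hkδ⟩

section LowerLevel

variable {n m q : ℕ}

noncomputable def lowerLevelResidual (f : (Fin n → ℝ) → (Fin m → ℝ) → ℝ)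
    (g : (Fin n → ℝ) → (Fin m → ℝ) → Fin q → ℝ) (x : Fin n → ℝ) (y : Fin m → ℝ) : ℝ :=
  max (max 0 (f x y - (phi f g x).toReal)) (Finset.univ.fold max 0 fun i => g x y i)

variable {f : (Fin n → ℝ) → (Fin m → ℝ) → ℝ} {g : (Fin n → ℝ) → (Fin m → ℝ) → Fin q → ℝ}
  {x : Fin n → ℝ} {y z : Fin m → ℝ}

theorem lowerLevelResidual_nonneg : 0 ≤ lowerLevelResidual f g x y :=
  (le_max_left _ _).trans (le_max_left _ _)

theorem sub_phi_le_lowerLevelResidual : f x y - (phi f g x).toReal ≤ lowerLevelResidual f g x y :=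
  (le_max_right _ _).trans (le_max_left _ _)

theorem le_lowerLevelResidual (i : Fin q) : g x y i ≤ lowerLevelResidual f g x y :=
  ((Finset.le_fold_max _).2 (Or.inr ⟨i, Finset.mem_univ _, le_rfl⟩)).trans (le_max_right _ _)

theorem phi_toReal_eq_of_mem_Sol (h : y ∈ Sol f g x) : (phi f g x).toReal = f x y := by
  have : phi f g x = (f x y : EReal) :=
    le_antisymm (sInf_le ⟨y, h.1, rfl⟩) (le_sInf fun _ ⟨z, hz, hv⟩ => hv ▸
      EReal.coe_le_coe_iff.2 (h.2 z hz))
  rw [this, EReal.toReal_coe]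

theorem mem_Sol_of_le_phi_s6 (hne : (Sol f g x).Nonempty) (hz : ∀ i, g x z i ≤ 0)
    (hle : f x z ≤ (phi f g x).toReal) : z ∈ Sol f g x := by
  obtain ⟨y, hy⟩ := hne
  rw [phi_toReal_eq_of_mem_Sol hy] at hle
  exact ⟨hz, fun z' hz' => hle.trans (hy.2 z' hz')⟩

end LowerLevel

section LinearLowerLevel

variable {n m q : ℕ} {c : (Fin n → ℝ) → Fin m → ℝ} {A : (Fin n → ℝ) → Fin q → ℝ}
  {B : (Fin n → ℝ) → Fin q → Fin m → ℝ}

variable (c A B) in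
def linearObjective : (Fin n → ℝ) → (Fin m → ℝ) → ℝ := fun x y => ∑ j, c x j * y j

variable (c A B) in
def affineConstraints : (Fin n → ℝ) → (Fin m → ℝ) → Fin q → ℝ :=
  fun x y i => A x i + ∑ j, B x i j * y j

/-- `f(x,z) ≤ φ` and `g(x,z) ≤ 0` are the inequalities `⟪𝓑(x)_io, z⟫ ≤ b_io` with right-hand
side `b_none = φ` and `b_(some j) = -A_j(x)`. -/
theorem inner_toLp_Brow_sub (x : Fin n → ℝ) (z : Fin m → ℝ) (φ : ℝ) (io : Option (Fin q)) :
    ⟪WithLp.toLp 2 (Brow c B x io), WithLp.toLp 2 z⟫ - io.elim φ (fun j => -A x j) =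
      io.elim (linearObjective c x z - φ) (affineConstraints A B x z) := by
  cases io <;>
    simp [Brow, linearObjective, affineConstraints, EuclideanSpace.inner_toLp_toLp, dotProduct,
      mul_comm, add_comm]

variable (A B) in
/-- Row indices of `𝓑(x)`: `none` for `c(x)ᵀ` and `some j` for `j ∈ I(x̄,ȳ)`. -/
abbrev RowIndex (xb : Fin n → ℝ) (yb : Fin m → ℝ) : Type :=
  {io : Option (Fin q) // ∀ j, io = some j → A xb j + ∑ k, B xb j k * yb k = 0}

variable (c B) in
def activeRows {xb : Fin n → ℝ} {yb : Fin m → ℝ} (x : Fin n → ℝ) (io : RowIndex A B xb yb) :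
    EuclideanSpace ℝ (Fin m) :=
  WithLp.toLp 2 (Brow c B x io.1)

theorem linearIndepOn_activeRows_of_constant_rank {xb : Fin n → ℝ} {yb : Fin m → ℝ}
    {U : Set (Fin n → ℝ)}
    (hrank : ∀ J : Set (Option (Fin q)),
      (∀ io ∈ J, ∀ j : Fin q, io = some j → A xb j + ∑ k, B xb j k * yb k = 0) →
      ∃ r : ℕ, ∀ x ∈ U, Module.finrank ℝ ↥(Submodule.span ℝ (Brow c B x '' J)) = r)
    {s : Finset (RowIndex A B xb yb)} {x x' : Fin n → ℝ} (hx : x ∈ U) (hx' : x' ∈ U)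
    (h : LinearIndepOn ℝ (activeRows c B x) (s : Set (RowIndex A B xb yb))) :
    LinearIndepOn ℝ (activeRows c B x') (s : Set (RowIndex A B xb yb)) := by
  obtain ⟨r, hr⟩ := hrank (Subtype.val '' s) fun _ ⟨(io : RowIndex A B xb yb), _, hio⟩ =>
    hio ▸ io.2
  replace hr : ∀ x ∈ U, Module.finrank ℝ
      (Submodule.span ℝ ((fun io : RowIndex A B xb yb => Brow c B x io.1) '' s)) = r :=
    fun x hx => by rw [← hr x hx, ← Set.image_image]
  unfold activeRows at h ⊢
  rw [linearIndepOn_toLp_iff] at h ⊢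
  exact h.of_finrank_span_image_eq (by rw [hr x hx, hr x' hx'])

theorem exists_uniform_hoffman_bound_activeRows (hc : Continuous c) (hB : Continuous B)
    {xb : Fin n → ℝ} {yb : Fin m → ℝ}
    (hCR : ∃ U ∈ 𝓝 xb, ∀ J : Set (Option (Fin q)),
      (∀ io ∈ J, ∀ j : Fin q, io = some j → A xb j + ∑ k, B xb j k * yb k = 0) →
      ∃ r : ℕ, ∀ x ∈ U, Module.finrank ℝ ↥(Submodule.span ℝ (Brow c B x '' J)) = r) :
    ∃ C, 0 ≤ C ∧ ∃ δ > 0, ∀ x, dist x xb < δ → ∀ b : RowIndex A B xb yb → ℝ,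
      (polyhedron (activeRows c B x) b).Nonempty → ∀ t R, 0 ≤ R →
      (∀ io, ⟪activeRows c B x io, t⟫ - b io ≤ R) →
      ∃ p ∈ polyhedron (activeRows c B x) b, ‖t - p‖ ≤ C * R := by
  classical
  obtain ⟨U, hU, hrank⟩ := hCR
  obtain ⟨δ, hδ, hδU⟩ := Metric.nhds_basis_closedBall.mem_iff.1 hU
  have hw (io : RowIndex A B xb yb) : Continuous fun x => activeRows c B x io := by
    rcases io with ⟨_ | j, -⟩
    exacts [(PiLp.continuous_toLp 2 _).comp hc,
      (PiLp.continuous_toLp 2 _).comp ((continuous_apply j).comp hB)]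
  obtain ⟨C, hC, hbound⟩ := exists_uniform_hoffman_bound (isCompact_closedBall xb δ) hw
    fun s x hx x' hx' => linearIndepOn_activeRows_of_constant_rank hrank (hδU hx) (hδU hx')
  exact ⟨C, hC, δ, hδ, fun x hx => hbound x (Metric.ball_subset_closedBall hx)⟩

theorem exists_local_hoffman_bound (hc : Continuous c) (hB : Continuous B)
    {xb : Fin n → ℝ} {yb : Fin m → ℝ}
    (hCR : ∃ U ∈ 𝓝 xb, ∀ J : Set (Option (Fin q)),
      (∀ io ∈ J, ∀ j : Fin q, io = some j → A xb j + ∑ k, B xb j k * yb k = 0) →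
      ∃ r : ℕ, ∀ x ∈ U, Module.finrank ℝ ↥(Submodule.span ℝ (Brow c B x '' J)) = r) :
    ∃ C, 0 ≤ C ∧ ∃ δ > 0, ∀ x, dist x xb < δ →
      (Sol (linearObjective c) (affineConstraints A B) x).Nonempty → ∀ y, ∃ p,
        (∀ j, affineConstraints A B xb yb j = 0 → affineConstraints A B x p j ≤ 0) ∧
        linearObjective c x p ≤ (phi (linearObjective c) (affineConstraints A B) x).toReal ∧
        dist y p ≤ C * lowerLevelResidual (linearObjective c) (affineConstraints A B) x y := by
  obtain ⟨C, hC, δ, hδ, hbound⟩ := exists_uniform_hoffman_bound_activeRows hc hB hCR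
  refine ⟨C, hC, δ, hδ, fun x hx ⟨y₀, hy₀⟩ y => ?_⟩
  set φ := (phi (linearObjective c) (affineConstraints A B) x).toReal
  have hsys (io : RowIndex A B xb yb) (z : Fin m → ℝ) :
      ⟪activeRows c B x io, WithLp.toLp 2 z⟫ - io.1.elim φ (-A x ·) =
        io.1.elim (linearObjective c x z - φ) (affineConstraints A B x z) :=
    inner_toLp_Brow_sub x z φ io.1
  have hfeas : WithLp.toLp 2 y₀ ∈
      polyhedron (activeRows c B x) fun io : RowIndex A B xb yb => io.1.elim φ (-A x ·) := by
    intro io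
    rw [← sub_nonpos, hsys]
    rcases io with ⟨_ | j, -⟩
    exacts [by simp [φ, phi_toReal_eq_of_mem_Sol hy₀], hy₀.1 j]
  have hres (io : RowIndex A B xb yb) :
      ⟪activeRows c B x io, WithLp.toLp 2 y⟫ - io.1.elim φ (-A x ·) ≤
        lowerLevelResidual (linearObjective c) (affineConstraints A B) x y := by
    rw [hsys]
    rcases io with ⟨_ | j, -⟩
    exacts [sub_phi_le_lowerLevelResidual, le_lowerLevelResidual (g := affineConstraints A B) j]
  obtain ⟨p, hp, hdist⟩ := hbound x hx (fun io => io.1.elim φ (-A x ·)) ⟨_, hfeas⟩ _ _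
    lowerLevelResidual_nonneg hres
  refine ⟨p.ofLp, fun j hj => ?_, ?_, ?_⟩
  · have h := hp ⟨some j, fun j' h => Option.some_injective _ h ▸ hj⟩
    beta_reduce at h
    rwa [← sub_nonpos, ← WithLp.toLp_ofLp 2 p, hsys] at h
  · have h := hp ⟨none, by simp⟩
    beta_reduce at h
    rw [← sub_nonpos, ← WithLp.toLp_ofLp 2 p, hsys] at h
    exact sub_nonpos.1 h
  · calc dist y p.ofLp ≤ dist (WithLp.toLp 2 y) p := by
          simpa using (PiLp.lipschitzWith_ofLp 2 _).dist_le_mul (WithLp.toLp 2 y) p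
      _ ≤ _ := by rwa [dist_eq_norm]

theorem exists_local_error_bound (hc : Continuous c) (hA : Continuous A) (hB : Continuous B)
    {xb : Fin n → ℝ} {yb : Fin m → ℝ}
    (hgph : yb ∈ Sol (linearObjective c) (affineConstraints A B) xb)
    (hCR : ∃ U ∈ 𝓝 xb, ∀ J : Set (Option (Fin q)),
      (∀ io ∈ J, ∀ j : Fin q, io = some j → A xb j + ∑ k, B xb j k * yb k = 0) →
      ∃ r : ℕ, ∀ x ∈ U, Module.finrank ℝ ↥(Submodule.span ℝ (Brow c B x '' J)) = r) :
    ∃ C, 0 ≤ C ∧ ∃ ρ > 0, ∃ δ > 0, ∀ x y, dist x xb < δ → dist y yb < δ →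
      (Sol (linearObjective c) (affineConstraints A B) x).Nonempty →
      lowerLevelResidual (linearObjective c) (affineConstraints A B) x y ≤ ρ →
      Metric.infDist y (Sol (linearObjective c) (affineConstraints A B) x) ≤
        C * lowerLevelResidual (linearObjective c) (affineConstraints A B) x y := by
  obtain ⟨C, hC, δ₀, hδ₀, hoff⟩ := exists_local_hoffman_bound hc hB hCR
  have hcont (j : Fin q) : Continuous fun p : (Fin n → ℝ) × (Fin m → ℝ) =>
      affineConstraints A B p.1 p.2 j := by
    unfold affineConstraints
    fun_prop
  obtain ⟨δ₁, hδ₁, hmargin⟩ := Metric.eventually_nhds_iff.1 <|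
    eventually_nonpos_of_ne_zero (fun j => (hcont j).continuousAt) (p₀ := (xb, yb)) hgph.1
  refine ⟨C, hC, δ₁ / (2 * (C + 1)), by positivity, min δ₀ (δ₁ / 2), by positivity,
    fun x y hx hy hne hR => ?_⟩
  obtain ⟨p, hact, hobj, hdist⟩ := hoff x (hx.trans_le (min_le_left _ _)) hne y
  have hCR : C * lowerLevelResidual (linearObjective c) (affineConstraints A B) x y ≤ δ₁ / 2 :=
    calc _ ≤ (C + 1) * (δ₁ / (2 * (C + 1))) :=
          mul_le_mul (by linarith) hR lowerLevelResidual_nonneg (by linarith)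
      _ = δ₁ / 2 := by field_simp
  have hpyb : dist p yb < δ₁ := calc
    dist p yb ≤ dist y p + dist y yb := dist_triangle_left _ _ _
    _ < δ₁ / 2 + δ₁ / 2 := add_lt_add_of_le_of_lt (hdist.trans hCR) (hy.trans_le (min_le_right _ _))
    _ = δ₁ := add_halves δ₁
  have hp : p ∈ Sol (linearObjective c) (affineConstraints A B) x := by
    refine mem_Sol_of_le_phi_s6 hne (fun j => ?_) hobj
    by_cases hj : affineConstraints A B xb yb j = 0
    · exact hact j hj
    · refine hmargin (y := (x, p)) ?_ j hj
      rw [Prod.dist_eq]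
      exact max_lt (hx.trans_le ((min_le_right _ _).trans (half_le_self hδ₁.le))) hpyb
  exact (Metric.infDist_le_dist_of_mem hp).trans hdist

end LinearLowerLevel

/-- Theorem 4.5: for a lower level problem `min_y { c(x)ᵀy | A(x) + B(x)y ≤ 0 }` with
locally Lipschitz data, inner semicontinuity of `S` at `(x̄,ȳ)` and a local constant row
rank condition on the submatrices `𝓑(x)_J` of `𝓑(x) = [c(x)ᵀ; B(x)_{I(x̄,ȳ)}]` imply RRCQ
at `(x̄,ȳ)`. -/
theorem rrcq_linear_in_y {n m q : ℕ}
    (c : (Fin n → ℝ) → Fin m → ℝ) (A : (Fin n → ℝ) → Fin q → ℝ)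
    (B : (Fin n → ℝ) → Fin q → Fin m → ℝ)
    (hc : LocallyLipschitz c) (hA : LocallyLipschitz A) (hB : LocallyLipschitz B)
    (xb : Fin n → ℝ) (yb : Fin m → ℝ)
    (hgph : yb ∈ Sol (fun x y => ∑ j, c x j * y j)
      (fun x y i => A x i + ∑ j, B x i j * y j) xb)
    (hisc : InnerSemicontinuous
      (Sol (fun x y => ∑ j, c x j * y j) (fun x y i => A x i + ∑ j, B x i j * y j)) xb yb)
    (hCR : ∃ U ∈ 𝓝 xb, ∀ J : Set (Option (Fin q)),
      (∀ io ∈ J, ∀ j : Fin q, io = some j → A xb j + ∑ k, B xb j k * yb k = 0) →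
      ∃ r : ℕ, ∀ x ∈ U,
        Module.finrank ℝ ↥(Submodule.span ℝ (Brow c B x '' J)) = r) :
    RRCQ (fun x y => ∑ j, c x j * y j)
      (fun x y i => A x i + ∑ j, B x i j * y j) xb yb := by
  obtain ⟨C, hC, ρ, hρ, δ, hδ, hloc⟩ :=
    exists_local_error_bound hc.continuous hA.continuous hB.continuous hgph hCR
  obtain ⟨δ', hδ', hnear⟩ := Metric.eventually_nhds_iff.1 (hisc.eventually_exists_dist_lt one_pos)
  refine ⟨C + (min δ δ' + 1) / ρ, add_pos_of_nonneg_of_pos hC (by positivity), min δ δ',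
    lt_min hδ hδ', fun x y hx hy hne => ?_⟩
  obtain ⟨z, hz, hzyb⟩ := hnear (hx.trans_le (min_le_right _ _))
  refine Metric.infDist_le_add_div_mul hz hC hρ
    (lowerLevelResidual_nonneg (f := linearObjective c) (g := affineConstraints A B)) ?_
    (hloc x y (hx.trans_le (min_le_left _ _)) (hy.trans_le (min_le_left _ _)) hne)
  calc dist y z ≤ dist y yb + dist z yb := dist_triangle_right _ _ _
    _ ≤ min δ δ' + 1 := add_le_add hy.le hzyb.le
end

section
/- Consider the bilevel problem: minimize −x + y over (x,y) ∈ ℝ×ℝ subject to x ≤ 2 and y ∈ S(x), where S(x) = argmin_y { −x²·y | y ∈ [0,1] }. Then (0,0) is a local minimizer of this problem, i.e., there is a neighbourhood of (0,0) in ℝ² such that every (x,y) in it with x ≤ 2 and y ∈ S(x) satisfies −x + y ≥ 0. -/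
open Filter Topology

/-- Solution set of the lower level problem `min_y { −x²·y | y ∈ [0,1] }`. -/
def S1 (x : ℝ) : Set ℝ :=
  {y | y ∈ Set.Icc (0 : ℝ) 1 ∧ ∀ z ∈ Set.Icc (0 : ℝ) 1, -x ^ 2 * y ≤ -x ^ 2 * z}

/-- Optimal value function `φ(x) = inf_y { −x²·y | y ∈ [0,1] }`. -/
noncomputable def phi1 (x : ℝ) : ℝ :=
  sInf ((fun y => -x ^ 2 * y) '' Set.Icc (0 : ℝ) 1)

/-- `(0,0)` is a local minimizer of the bilevel problem
`min { −x + y | x ≤ 2, y ∈ S1(x) }`. -/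
theorem origin_local_minimizer :
    ∃ V ∈ 𝓝 ((0, 0) : ℝ × ℝ), ∀ p ∈ V, p.1 ≤ 2 → p.2 ∈ S1 p.1 →
      (0 : ℝ) ≤ -p.1 + p.2 := by
  refine ⟨(Prod.fst) ⁻¹' Set.Ioo (-1 : ℝ) 1, ?_, ?_⟩
  · exact continuous_fst.continuousAt.preimage_mem_nhds
      (Ioo_mem_nhds (by norm_num) (by norm_num))
  · rintro ⟨x, y⟩ hp _ ⟨⟨hy0, hy1⟩, hmin⟩
    simp only [Set.mem_preimage, Set.mem_Ioo] at hp
    rcases eq_or_ne x 0 with hx | hx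
    · simp [hx]; linarith
    · have hx2 : (0 : ℝ) < x ^ 2 := by positivity
      have h1 := hmin 1 (by norm_num)
      have hy : (1 : ℝ) ≤ y := by nlinarith
      simp only
      linarith [hp.2]
end

section
/- For every κ > 0, the point (0,0) is not a local minimizer of the penalized problem: minimize −x + y + κ·x²·(1−y) over (x,y) ∈ ℝ×ℝ subject to x ≤ 2 and y ∈ [0,1]. That is, for every κ > 0 and every neighbourhood of (0,0) there exists (x,y) in it with x ≤ 2 and y ∈ [0,1] such that −x + y + κ·x²·(1−y) < 0. -/
open Filter Topology

/-- For every `κ > 0`, the point `(0,0)` is not a local minimizer of the penalized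
problem `min { −x + y + κ·x²·(1−y) | x ≤ 2, y ∈ [0,1] }`. -/
theorem origin_not_local_min_penalized :
    ∀ κ : ℝ, 0 < κ → ∀ V ∈ 𝓝 ((0, 0) : ℝ × ℝ),
      ∃ p : ℝ × ℝ, p ∈ V ∧ p.1 ≤ 2 ∧ p.2 ∈ Set.Icc (0 : ℝ) 1 ∧
        -p.1 + p.2 + κ * p.1 ^ 2 * (1 - p.2) < 0 := by
  intro κ hκ V hV
  rw [Metric.mem_nhds_iff] at hV
  obtain ⟨ε, hε, hball⟩ := hV
  set x : ℝ := min (min (ε / 2) (1 / (2 * κ))) 1 with hx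
  have hxpos : 0 < x := lt_min (lt_min (by linarith) (by positivity)) one_pos
  have hx1 : x ≤ ε / 2 := le_trans (min_le_left _ _) (min_le_left _ _)
  have hx2 : x ≤ 1 / (2 * κ) := le_trans (min_le_left _ _) (min_le_right _ _)
  have hx3 : x ≤ 1 := min_le_right _ _
  refine ⟨(x, 0), hball ?_, by linarith, ⟨le_refl 0, zero_le_one⟩, ?_⟩
  · rw [Metric.mem_ball, Prod.dist_eq]
    simp [Real.dist_eq, abs_of_pos hxpos]
    constructor <;> linarith
  · have hκx : κ * x ≤ 1 / 2 := by
      have := (le_div_iff₀ (by positivity)).mp hx2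
      linarith
    have : κ * x ^ 2 ≤ x / 2 := by nlinarith
    simp only
    nlinarith
end

section
/- Consider the bilevel problem (BPP) with data n = m = 1, F(x,y) = −x + y, X = { x ∈ ℝ | x ≤ 2 }, f(x,y) = −x²·y, and lower level constraint y ∈ [0,1] (i.e., g₁(x,y) = −y and g₂(x,y) = y − 1). Then (0,0) is a local minimizer of (BPP), but (BPP) is not partially calm at (0,0): for all δ > 0 and κ̄ > 0 there exists a triplet (x,y,u) with ‖(x,y,u) − (0,0,0)‖∞ ≤ δ, x ≤ 2, f(x,y) − φ(x) ≤ u and y ∈ [0,1] such that F(x,y) + κ̄|u| < F(0,0) = 0. -/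
open Filter Topology

lemma phi1_eq (x : ℝ) : phi1 x = -x ^ 2 := by
  apply IsLeast.csInf_eq
  constructor
  · exact ⟨1, ⟨zero_le_one, le_refl 1⟩, by ring⟩
  · rintro a ⟨y, ⟨hy0, hy1⟩, rfl⟩
    have hx : -x ^ 2 ≤ 0 := by nlinarith [sq_nonneg x]
    dsimp only
    nlinarith

/-- Example 4.2: `(0,0)` is a local minimizer of the bilevel problem
`min { −x + y | x ≤ 2, y ∈ S1(x) }`, but this problem is not partially calm at `(0,0)`. -/
theorem local_min_but_not_partially_calm :
    (∃ V ∈ 𝓝 ((0, 0) : ℝ × ℝ), ∀ p ∈ V, p.1 ≤ 2 → p.2 ∈ S1 p.1 →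
      (0 : ℝ) ≤ -p.1 + p.2) ∧
    ∀ δ κ : ℝ, 0 < δ → 0 < κ → ∃ x y u : ℝ,
      |x| ≤ δ ∧ |y| ≤ δ ∧ |u| ≤ δ ∧ x ≤ 2 ∧ -x ^ 2 * y - phi1 x ≤ u ∧
      y ∈ Set.Icc (0 : ℝ) 1 ∧ -x + y + κ * |u| < 0 := by
  constructor
  · refine ⟨Set.Ioo (-1/2) (1/2) ×ˢ Set.Ioo (-1/2) (1/2), ?_, ?_⟩
    · exact prod_mem_nhds (Ioo_mem_nhds (by norm_num) (by norm_num))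
        (Ioo_mem_nhds (by norm_num) (by norm_num))
    · rintro ⟨x, y⟩ ⟨⟨hx1, hx2⟩, hy1, hy2⟩ _ ⟨⟨hy0, _⟩, hmin⟩
      simp only at *
      by_cases hx : x = 0
      · linarith
      · have := hmin 1 ⟨zero_le_one, le_refl 1⟩
        have hx2 : 0 < x ^ 2 := by positivity
        nlinarith
  · intro δ κ hδ hκ
    set x := min δ (min 1 (1 / (2 * κ))) with hxdef
    have hx0 : 0 < x := by
      apply lt_min hδ (lt_min one_pos (by positivity))
    have hxδ : x ≤ δ := min_le_left _ _
    have hx1 : x ≤ 1 := le_trans (min_le_right _ _) (min_le_left _ _)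
    have hxκ : x ≤ 1 / (2 * κ) := le_trans (min_le_right _ _) (min_le_right _ _)
    refine ⟨x, 0, x ^ 2, ?_, ?_, ?_, ?_, ?_, ?_, ?_⟩
    · rwa [abs_of_pos hx0]
    · simp [le_of_lt hδ]
    · rw [abs_of_pos (by positivity)]; nlinarith
    · linarith
    · rw [phi1_eq]; ring_nf; nlinarith [sq_nonneg x]
    · exact ⟨le_refl 0, zero_le_one⟩
    · rw [abs_of_pos (by positivity : (0:ℝ) < x ^ 2)]
      have : κ * x ≤ 1/2 := by
        rw [le_div_iff₀ (by positivity)] at hxκ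
        nlinarith
      nlinarith
end

section
/- Consider the bilevel problem (BPP) with data n = m = 1, F(x,y) = −x + y, X = { x ∈ ℝ | x ≤ 2 }, f(x,y) = −x²·y, and lower level constraint y ∈ [0,1]. Then S is inner semicontinuous at (2,1), and (BPP) is partially calm at its global minimizer (2,1). -/
open Filter Topology

/-- Example 4.7: the solution map `S1` is inner semicontinuous at `(2,1)` and the
bilevel problem `min { −x + y | x ≤ 2, y ∈ S1(x) }` is partially calm at its global
minimizer `(2,1)` (whose objective value is `−2 + 1`). -/
theorem insc_and_partially_calm_at_two_one :
    (∀ xseq : ℕ → ℝ, Tendsto xseq atTop (𝓝 2) →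
      ∃ yseq : ℕ → ℝ, Tendsto yseq atTop (𝓝 1) ∧
        ∀ᶠ k in atTop, yseq k ∈ S1 (xseq k)) ∧
    ∃ δ : ℝ, 0 < δ ∧ ∃ κ : ℝ, 0 < κ ∧ ∀ x y u : ℝ,
      |x - 2| ≤ δ → |y - 1| ≤ δ → |u| ≤ δ → x ≤ 2 →
      -x ^ 2 * y - phi1 x ≤ u → y ∈ Set.Icc (0 : ℝ) 1 →
      -(2 : ℝ) + 1 ≤ -x + y + κ * |u| := by
  constructor
  · intro xseq _
    refine ⟨fun _ => 1, tendsto_const_nhds, .of_forall fun k => ?_⟩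
    refine ⟨by norm_num, fun z ⟨hz0, hz1⟩ => ?_⟩
    show -xseq k ^ 2 * 1 ≤ -xseq k ^ 2 * z
    nlinarith [mul_nonneg (sq_nonneg (xseq k)) (by linarith : (0:ℝ) ≤ 1 - z)]
  · refine ⟨1, one_pos, 1, one_pos, fun x y u hx hy hu hx2 hcalm ⟨hy0, hy1⟩ => ?_⟩
    rw [phi1_eq] at hcalm
    have hx1 : 1 ≤ x := by
      have := abs_le.mp hx; linarith [this.1]
    have h1 : x ^ 2 * (1 - y) ≤ u := by nlinarith
    have h2 : 1 - y ≤ u := by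
      nlinarith [mul_nonneg (by nlinarith : (0:ℝ) ≤ x ^ 2 - 1) (by linarith : (0:ℝ) ≤ 1 - y)]
    have := le_abs_self u
    linarith
end

section
/- Consider the bilevel problem: minimize x·y₁ over (x,y) ∈ ℝ×ℝ² subject to y ∈ S(x), where S(x) = argmin_y { −x²·y₂ | y₂ ≤ 0, −x·y₁ + y₂ ≤ 0 }. Then (0,(0,0)) is a global minimizer of this problem (every feasible point has objective value ≥ 0 and the value at (0,(0,0)) is 0), and S is inner semicontinuous at (0,(0,0)). -/
open Filter Topology

/-- Solution set of the lower level problem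
`min_{y} { −x²·y₂ | y₂ ≤ 0, −x·y₁ + y₂ ≤ 0 }`. -/
def S2 (x : ℝ) : Set (ℝ × ℝ) :=
  {y | (y.2 ≤ 0 ∧ -x * y.1 + y.2 ≤ 0) ∧
    ∀ z : ℝ × ℝ, z.2 ≤ 0 ∧ -x * z.1 + z.2 ≤ 0 → -x ^ 2 * y.2 ≤ -x ^ 2 * z.2}

/-- Optimal value function `φ(x) = inf { −x²·y₂ | y₂ ≤ 0, −x·y₁ + y₂ ≤ 0 }`. -/
noncomputable def phi2 (x : ℝ) : ℝ :=
  sInf {v : ℝ | ∃ y : ℝ × ℝ, (y.2 ≤ 0 ∧ -x * y.1 + y.2 ≤ 0) ∧ v = -x ^ 2 * y.2}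

/-- `(0,(0,0))` is a global minimizer of `min { x·y₁ | y ∈ S2(x) }` and `S2` is inner
semicontinuous at `(0,(0,0))`. -/
theorem global_min_and_insc :
    (((0, 0) : ℝ × ℝ) ∈ S2 0 ∧ (0 : ℝ) * (0 : ℝ) = 0 ∧
      ∀ (x : ℝ) (y : ℝ × ℝ), y ∈ S2 x → 0 ≤ x * y.1) ∧
    ∀ xseq : ℕ → ℝ, Tendsto xseq atTop (𝓝 0) →
      ∃ yseq : ℕ → ℝ × ℝ, Tendsto yseq atTop (𝓝 ((0, 0) : ℝ × ℝ)) ∧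
        ∀ᶠ k in atTop, yseq k ∈ S2 (xseq k) := by
  have hmem : ∀ x : ℝ, ((x, 0) : ℝ × ℝ) ∈ S2 x := by
    intro x
    refine ⟨⟨le_refl 0, show -x * x + 0 ≤ 0 by nlinarith [sq_nonneg x]⟩, ?_⟩
    rintro z ⟨hz1, hz2⟩
    simp only
    nlinarith [sq_nonneg x]
  constructor
  · refine ⟨by simpa using hmem 0, by ring, ?_⟩
    intro x y hy
    rcases hy with ⟨⟨hy2, hy3⟩, hopt⟩
    by_cases hx : x = 0
    · simp [hx]
    · have hfeas := hopt (x, 0) ⟨le_refl 0, show -x * x + 0 ≤ 0 by nlinarith [sq_nonneg x]⟩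
      simp only at hfeas
      have hx2 : 0 < x ^ 2 := by positivity
      have hy20 : y.2 = 0 := by nlinarith
      nlinarith
  · intro xseq hx
    refine ⟨fun k => (xseq k, 0), ?_, Filter.Eventually.of_forall fun k => hmem (xseq k)⟩
    exact (hx.prodMk_nhds tendsto_const_nhds)
end

section
/- Consider the bilevel problem (BPP) with data n = 1, m = 2, F(x,y) = x·y₁, X = ℝ, f(x,y) = −x²·y₂, g₁(x,y) = y₂, g₂(x,y) = −x·y₁ + y₂. Then (BPP) is not partially calm at its global minimizer (0,(0,0)): for all δ > 0 and κ̄ > 0 there exists a triplet (x,y,u) with ‖(x,y,u) − (0,(0,0),0)‖∞ ≤ δ, f(x,y) − φ(x) ≤ u, g(x,y) ≤ 0 and F(x,y) + κ̄|u| < F(0,(0,0)) = 0. In particular, for no κ > 0 is (0,(0,0)) a local minimizer of the penalized problem: minimize x·y₁ − κ·x²·y₂ subject to y₂ ≤ 0 and −x·y₁ + y₂ ≤ 0. -/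
open Filter Topology

lemma key_neg (t κ : ℝ) (ht : 0 < t) (ht1 : t ≤ 1) (hκt : κ * t < 1) :
    -t * t + κ * t ^ 4 < 0 := by
  have h3 : t ^ 3 - κ * t ^ 4 > 0 := by
    nlinarith [mul_pos (sub_pos.mpr hκt) (pow_pos ht 3)]
  have h2 : t ^ 2 ≤ t := by nlinarith
  nlinarith [pow_pos ht 2, pow_pos ht 3]

lemma phi2_eq_zero (x : ℝ) : phi2 x = 0 := by
  have hmem : (0 : ℝ) ∈ {v : ℝ | ∃ y : ℝ × ℝ, (y.2 ≤ 0 ∧ -x * y.1 + y.2 ≤ 0) ∧ v = -x ^ 2 * y.2} := by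
    exact ⟨(0, 0), ⟨le_refl 0, by norm_num⟩, by norm_num⟩
  have hlb : ∀ v ∈ {v : ℝ | ∃ y : ℝ × ℝ, (y.2 ≤ 0 ∧ -x * y.1 + y.2 ≤ 0) ∧ v = -x ^ 2 * y.2},
      (0 : ℝ) ≤ v := by
    rintro v ⟨y, ⟨hy2, _⟩, rfl⟩
    nlinarith [sq_nonneg x]
  refine le_antisymm (csInf_le ⟨0, hlb⟩ hmem) (le_csInf ⟨0, hmem⟩ hlb)

/-- Example 4.8: the bilevel problem `min { x·y₁ | y ∈ S2(x) }` is not partially calm at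
its global minimizer `(0,(0,0))`; in particular, for no `κ > 0` is `(0,(0,0))` a local
minimizer of the penalized problem
`min { x·y₁ − κ·x²·y₂ | y₂ ≤ 0, −x·y₁ + y₂ ≤ 0 }`. -/
theorem not_partially_calm_example_two :
    (∀ δ κ : ℝ, 0 < δ → 0 < κ → ∃ (x : ℝ) (y : ℝ × ℝ) (u : ℝ),
      |x| ≤ δ ∧ |y.1| ≤ δ ∧ |y.2| ≤ δ ∧ |u| ≤ δ ∧
      -x ^ 2 * y.2 - phi2 x ≤ u ∧ y.2 ≤ 0 ∧ -x * y.1 + y.2 ≤ 0 ∧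
      x * y.1 + κ * |u| < 0) ∧
    ∀ κ : ℝ, 0 < κ → ¬ ∃ V ∈ 𝓝 (((0 : ℝ), ((0 : ℝ), (0 : ℝ))) : ℝ × (ℝ × ℝ)),
      ∀ p ∈ V, p.2.2 ≤ 0 → -p.1 * p.2.1 + p.2.2 ≤ 0 →
        (0 : ℝ) ≤ p.1 * p.2.1 - κ * p.1 ^ 2 * p.2.2 := by
  constructor
  · intro δ κ hδ hκ
    set t : ℝ := min δ (1 / (1 + κ)) with ht_def
    have hκ1 : (0:ℝ) < 1 + κ := by linarith
    have ht : 0 < t := lt_min hδ (by positivity)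
    have htδ : t ≤ δ := min_le_left _ _
    have htκ : t ≤ 1 / (1 + κ) := min_le_right _ _
    have ht1 : t ≤ 1 := htκ.trans (by rw [div_le_one hκ1]; linarith)
    refine ⟨-t, (t, -t ^ 2), t ^ 4, ?_, ?_, ?_, ?_, ?_, ?_, ?_, ?_⟩
    · rw [abs_neg, abs_of_pos ht]; exact htδ
    · rw [abs_of_pos ht]; exact htδ
    · simp only [abs_neg]
      rw [abs_of_pos (by positivity)]; nlinarith
    · rw [abs_of_pos (by positivity)]
      have h2 : t ^ 2 ≤ t := by nlinarith
      have h21 : t ^ 2 ≤ 1 := h2.trans ht1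
      nlinarith [sq_nonneg t, sq_nonneg (t^2)]
    · rw [phi2_eq_zero]; ring_nf; nlinarith
    · simp; positivity
    · simp; nlinarith
    · rw [abs_of_pos (by positivity)]
      have hκt : κ * t < 1 := by
        rw [← lt_div_iff₀' hκ]
        calc t ≤ 1 / (1 + κ) := htκ
          _ < 1 / κ := by apply div_lt_div_of_pos_left <;> linarith
      simp only
      nlinarith [key_neg t κ ht ht1 hκt]
  · rintro κ hκ ⟨V, hV, hP⟩
    rcases Metric.mem_nhds_iff.mp hV with ⟨ε, hε, hball⟩
    set t : ℝ := min (ε / 2) (1 / (1 + κ)) with ht_def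
    have hκ1 : (0:ℝ) < 1 + κ := by linarith
    have ht : 0 < t := lt_min (by linarith) (by positivity)
    have htε : t < ε := lt_of_le_of_lt (min_le_left _ _) (by linarith)
    have htκ : t ≤ 1 / (1 + κ) := min_le_right _ _
    have ht1 : t ≤ 1 := htκ.trans (by rw [div_le_one hκ1]; linarith)
    have hmem : ((-t, (t, -t ^ 2)) : ℝ × (ℝ × ℝ)) ∈ V := by
      apply hball
      rw [Metric.mem_ball, Prod.dist_eq, Prod.dist_eq]
      simp only [Real.dist_eq, sub_zero, abs_neg]
      rw [abs_of_pos ht, abs_of_pos (by positivity : (0:ℝ) < t ^ 2)]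
      have : t ^ 2 ≤ t := by nlinarith
      rw [max_lt_iff, max_lt_iff]
      exact ⟨htε, htε, lt_of_le_of_lt this htε⟩
    have h := hP _ hmem (by simp; positivity) (by simp; nlinarith)
    simp only at h
    have hκt : κ * t < 1 := by
      rw [← lt_div_iff₀' hκ]
      calc t ≤ 1 / (1 + κ) := htκ
        _ < 1 / κ := by apply div_lt_div_of_pos_left <;> linarith
    nlinarith [key_neg t κ ht ht1 hκt]
end

section
/- For S : ℝ² ⇒ ℝ given by S(x) = argmin_y { x₁·y | y ∈ [−1,1] } and φ(x) = inf_y { x₁·y | y ∈ [−1,1] }, one has S(x) = {−1} for x₁ > 0, S(x) = [−1,1] for x₁ = 0, S(x) = {1} for x₁ < 0, and φ(x) = −|x₁| for all x ∈ ℝ². Moreover, every feasible point of the bilevel problem minimize x₂·(y+1) subject to x₁ = x₂² and y ∈ S(x) has objective value 0; in particular ((0,0),−1) is a global minimizer of this bilevel problem. -/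
open Filter Topology

/-- Solution set of the lower level problem `min_y { x₁·y | y ∈ [−1,1] }`. -/
def S3 (x : ℝ × ℝ) : Set ℝ :=
  {y | y ∈ Set.Icc (-1 : ℝ) 1 ∧ ∀ z ∈ Set.Icc (-1 : ℝ) 1, x.1 * y ≤ x.1 * z}

/-- Optimal value function `φ(x) = inf_y { x₁·y | y ∈ [−1,1] }`. -/
noncomputable def phi3 (x : ℝ × ℝ) : ℝ :=
  sInf ((fun y => x.1 * y) '' Set.Icc (-1 : ℝ) 1)

lemma S3_pos (x : ℝ × ℝ) (hx : 0 < x.1) : S3 x = {-1} := by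
  ext y
  simp only [S3, Set.mem_setOf_eq, Set.mem_Icc, Set.mem_singleton_iff]
  constructor
  · rintro ⟨⟨h1, h2⟩, h3⟩
    have := h3 (-1) ⟨le_refl _, by norm_num⟩
    nlinarith
  · rintro rfl
    refine ⟨⟨le_refl _, by norm_num⟩, fun z hz => ?_⟩
    rcases hz with ⟨hz1, hz2⟩
    nlinarith

lemma S3_neg (x : ℝ × ℝ) (hx : x.1 < 0) : S3 x = {1} := by
  ext y
  simp only [S3, Set.mem_setOf_eq, Set.mem_Icc, Set.mem_singleton_iff]
  constructor
  · rintro ⟨⟨h1, h2⟩, h3⟩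
    have := h3 1 ⟨by norm_num, le_refl _⟩
    nlinarith
  · rintro rfl
    refine ⟨⟨by norm_num, le_refl _⟩, fun z hz => ?_⟩
    rcases hz with ⟨hz1, hz2⟩
    nlinarith

theorem lower_level_solution_and_value_three :
    (∀ x : ℝ × ℝ, 0 < x.1 → S3 x = {-1}) ∧
    (∀ x : ℝ × ℝ, x.1 = 0 → S3 x = Set.Icc (-1 : ℝ) 1) ∧
    (∀ x : ℝ × ℝ, x.1 < 0 → S3 x = {1}) ∧
    (∀ x : ℝ × ℝ, phi3 x = -|x.1|) ∧
    (∀ (x : ℝ × ℝ) (y : ℝ), x.1 = x.2 ^ 2 → y ∈ S3 x → x.2 * (y + 1) = 0) ∧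
    ((0 : ℝ) = (0 : ℝ) ^ 2 ∧ (-1 : ℝ) ∈ S3 (0, 0) ∧
      ∀ (x : ℝ × ℝ) (y : ℝ), x.1 = x.2 ^ 2 → y ∈ S3 x →
        (0 : ℝ) * ((-1 : ℝ) + 1) ≤ x.2 * (y + 1)) := by
  have hfeas : ∀ (x : ℝ × ℝ) (y : ℝ), x.1 = x.2 ^ 2 → y ∈ S3 x → x.2 * (y + 1) = 0 := by
    intro x y hc hy
    rcases eq_or_ne x.2 0 with h | h
    · rw [h]; ring
    · have hx : 0 < x.1 := by rw [hc]; positivity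
      rw [S3_pos x hx] at hy
      rw [Set.mem_singleton_iff] at hy
      rw [hy]; ring
  refine ⟨S3_pos, ?_, S3_neg, ?_, hfeas, by norm_num, ?_, ?_⟩
  · intro x hx
    ext y
    simp [S3, hx]
  · intro x
    have hmem : -|x.1| ∈ (fun y => x.1 * y) '' Set.Icc (-1 : ℝ) 1 := by
      rcases le_or_gt 0 x.1 with h | h
      · exact ⟨-1, ⟨le_refl _, by norm_num⟩, by rw [abs_of_nonneg h]; ring⟩
      · exact ⟨1, ⟨by norm_num, le_refl _⟩, by rw [abs_of_neg h]; ring⟩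
    apply le_antisymm
    · exact csInf_le ⟨-|x.1|, by
        rintro _ ⟨z, ⟨hz1, hz2⟩, rfl⟩
        show -|x.1| ≤ x.1 * z
        rcases le_or_gt 0 x.1 with h | h
        · rw [abs_of_nonneg h]; nlinarith
        · rw [abs_of_neg h]; nlinarith⟩ hmem
    · apply le_csInf ⟨_, hmem⟩
      rintro _ ⟨z, ⟨hz1, hz2⟩, rfl⟩
      show -|x.1| ≤ x.1 * z
      rcases le_or_gt 0 x.1 with h | h
      · rw [abs_of_nonneg h]; nlinarith
      · rw [abs_of_neg h]; nlinarith
  · simp only [S3, Set.mem_setOf_eq, Set.mem_Icc]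
    exact ⟨⟨le_refl _, by norm_num⟩, fun z hz => by simp⟩
  · intro x y hc hy
    rw [hfeas x y hc hy]
    norm_num
end

section
/- Consider the bilevel problem (BPP) with data n = 2, m = 1, F(x,y) = x₂·(y+1), X = { x ∈ ℝ² | x₁ = x₂² }, f(x,y) = x₁·y, and lower level constraint y ∈ [−1,1] (i.e., g₁(x,y) = −1 − y, g₂(x,y) = y − 1). Then (BPP) is not partially calm at its global minimizer ((0,0),−1): for all δ > 0 and κ̄ > 0 there exists a triplet (x,y,u) with ‖(x,y,u) − ((0,0),−1,0)‖∞ ≤ δ, x₁ = x₂², f(x,y) − φ(x) ≤ u, y ∈ [−1,1] and F(x,y) + κ̄|u| < F((0,0),−1) = 0. In particular, for no κ > 0 is ((0,0),−1) a local minimizer of the penalized problem: minimize x₂·(y+1) + κ·(x₁·y + |x₁|) subject to x₁ = x₂² and y ∈ [−1,1]. -/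
open Filter Topology

lemma phi3_lb (x : ℝ × ℝ) (hx : 0 ≤ x.1) :
    -x.1 ≤ phi3 x := by
  apply le_csInf
  · exact (Set.nonempty_Icc.2 (by norm_num)).image _
  · rintro b ⟨z, hz, rfl⟩
    have := mul_le_mul_of_nonneg_left hz.1 hx
    simpa using this

lemma key (δ κ : ℝ) (hδ : 0 < δ) (hκ : 0 < κ) :
    ∃ t s : ℝ, 0 < t ∧ 0 < s ∧ t ≤ δ ∧ s ≤ δ ∧ s ≤ 1 ∧ t ^ 2 ≤ δ ∧
      t ^ 2 * s ≤ δ ∧ -t * s + κ * (t ^ 2 * s) < 0 := by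
  refine ⟨min δ (min 1 (1 / (2 * κ))), min δ 1, ?_, ?_, min_le_left _ _,
    min_le_left _ _, min_le_right _ _, ?_, ?_, ?_⟩
  · positivity
  · positivity
  all_goals
    set t := min δ (min 1 (1 / (2 * κ))) with ht
    set s := min δ 1 with hs
  · have h1 : t ≤ 1 := le_trans (min_le_right _ _) (min_le_left _ _)
    have h0 : 0 < t := by positivity
    nlinarith [min_le_left δ (min 1 (1 / (2 * κ)))]
  · have h1 : t ≤ 1 := le_trans (min_le_right _ _) (min_le_left _ _)
    have h0 : 0 < t := by positivity
    have h2 : s ≤ 1 := min_le_right _ _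
    have h3 : 0 < s := by positivity
    nlinarith [min_le_left δ (min 1 (1 / (2 * κ)))]
  · have h0 : 0 < t := by positivity
    have h3 : 0 < s := by positivity
    have h4 : t ≤ 1 / (2 * κ) := le_trans (min_le_right _ _) (min_le_right _ _)
    have h5 : κ * t ≤ 1 / 2 := by
      rw [le_div_iff₀ (by positivity)] at h4
      linarith
    nlinarith [mul_pos h0 h3, mul_le_mul_of_nonneg_right h5 (le_of_lt (mul_pos h0 h3))]

/-- Example 4.9: the bilevel problem `min { x₂·(y+1) | x₁ = x₂², y ∈ S3(x) }` is not
partially calm at its global minimizer `((0,0),−1)`; in particular, for no `κ > 0` is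
`((0,0),−1)` a local minimizer of the penalized problem
`min { x₂·(y+1) + κ·(x₁·y + |x₁|) | x₁ = x₂², y ∈ [−1,1] }`. -/
theorem not_partially_calm_example_three :
    (∀ δ κ : ℝ, 0 < δ → 0 < κ → ∃ (x : ℝ × ℝ) (y u : ℝ),
      |x.1| ≤ δ ∧ |x.2| ≤ δ ∧ |y - (-1)| ≤ δ ∧ |u| ≤ δ ∧
      x.1 = x.2 ^ 2 ∧ x.1 * y - phi3 x ≤ u ∧ y ∈ Set.Icc (-1 : ℝ) 1 ∧
      x.2 * (y + 1) + κ * |u| < 0) ∧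
    ∀ κ : ℝ, 0 < κ → ¬ ∃ V ∈ 𝓝 ((((0 : ℝ), (0 : ℝ)), (-1 : ℝ)) : (ℝ × ℝ) × ℝ),
      ∀ p ∈ V, p.1.1 = p.1.2 ^ 2 → p.2 ∈ Set.Icc (-1 : ℝ) 1 →
        (0 : ℝ) ≤ p.1.2 * (p.2 + 1) + κ * (p.1.1 * p.2 + |p.1.1|) := by
  constructor
  · intro δ κ hδ hκ
    obtain ⟨t, s, ht, hs, htδ, hsδ, hs1, ht2, hts, hneg⟩ := key δ κ hδ hκ
    refine ⟨(t ^ 2, -t), -1 + s, t ^ 2 * s, ?_, ?_, ?_, ?_, by ring, ?_, ?_, ?_⟩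
    · rwa [abs_of_nonneg (by positivity)]
    · rwa [abs_neg, abs_of_pos ht]
    · rw [show -1 + s - (-1) = s by ring, abs_of_pos hs]; exact hsδ
    · rwa [abs_of_nonneg (mul_nonneg (sq_nonneg t) hs.le)]
    · have hlb : -(t ^ 2) ≤ phi3 (t ^ 2, -t) := phi3_lb (t ^ 2, -t) (sq_nonneg t)
      simp only
      nlinarith
    · constructor <;> simp <;> linarith
    · rw [abs_of_nonneg (mul_nonneg (sq_nonneg t) hs.le)]
      calc -t * (-1 + s + 1) + κ * (t ^ 2 * s) = -t * s + κ * (t ^ 2 * s) := by ring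
        _ < 0 := hneg
  · rintro κ hκ ⟨V, hV, hP⟩
    obtain ⟨ε, hε, hball⟩ := Metric.mem_nhds_iff.1 hV
    obtain ⟨t, s, ht, hs, htδ, hsδ, hs1, ht2, hts, hneg⟩ := key (ε / 2) κ (by linarith) hκ
    have hmem : (((t ^ 2, -t), -1 + s) : (ℝ × ℝ) × ℝ) ∈ Metric.ball (((0 : ℝ), (0 : ℝ)), (-1 : ℝ)) ε := by
      simp only [Metric.mem_ball, Prod.dist_eq, Real.dist_eq, max_lt_iff]
      refine ⟨⟨?_, ?_⟩, ?_⟩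
      · rw [sub_zero, abs_of_nonneg (by positivity)]; linarith
      · rw [sub_zero, abs_neg, abs_of_pos ht]; linarith
      · rw [show -1 + s - (-1) = s by ring, abs_of_pos hs]; linarith
    have h0 := hP _ (hball hmem) (by ring) (by constructor <;> simp <;> linarith)
    simp only [abs_of_nonneg (show (0:ℝ) ≤ t ^ 2 by positivity)] at h0
    nlinarith
end
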